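/- arXiv:2201.01432 — 11 statements merged into one kernel-verified Lean document; each statement's English description precedes it below -/
import Mathlib

section
/- Let R be a unital ring, A ∈ M_n(R) a square matrix, and let 0 ≤ k ≤ j and 0 < m be integers (with the convention A^0 = I_n). Then the block diagonal matrix diag(A^j, A^{k+m}) is Malcolmson subequivalent to diag(A^k, A^{j+m}). -/
open Matrix in
/-- The type of all rectangular matrices over `R`. -/
abbrev MatSig (R : Type) [Ring R] := Σ (n m : ℕ), Matrix (Fin n) (Fin m) R

open Matrix in
/-- The block diagonal-with-corner matrix `[[C, E], [0, D]]`, as an element of `MatSig R`. -/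
def blockSig {R : Type} [Ring R] {p q r s : ℕ} (C : Matrix (Fin p) (Fin r) R)
    (E : Matrix (Fin p) (Fin s) R) (D : Matrix (Fin q) (Fin s) R) : MatSig R :=
  ⟨p + q, r + s, Matrix.reindex finSumFinEquiv finSumFinEquiv (Matrix.fromBlocks C E 0 D)⟩

/-- One step of the Malcolmson relation: `A ≲ B` iff `A = C * B * D` for some `C, D`, or
`B = [[C, E], [0, D]]` and `A = [[C, 0], [0, D]]` for some `C, D, E`. -/
def MStep {R : Type} [Ring R] (A B : MatSig R) : Prop :=
  (∃ (C : Matrix (Fin A.1) (Fin B.1) R) (D : Matrix (Fin B.2.1) (Fin A.2.1) R),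
      A.2.2 = C * B.2.2 * D) ∨
  (∃ (p q r s : ℕ) (C : Matrix (Fin p) (Fin r) R) (E : Matrix (Fin p) (Fin s) R)
      (D : Matrix (Fin q) (Fin s) R), A = blockSig C 0 D ∧ B = blockSig C E D)

/-- Malcolmson subequivalence `A ≼_M B`: a finite chain of `MStep`s from `A` to `B`. -/
def Msub {R : Type} [Ring R] (A B : MatSig R) : Prop :=
  Relation.ReflTransGen (MStep (R := R)) A B

/-- A Sylvester matrix rank function for a unital ring `R`. -/
structure SylvesterRank (R : Type) [Ring R] where
  rk : MatSig R → ℝ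
  rk_nonneg : ∀ A, 0 ≤ rk A
  rk_zero : rk ⟨1, 1, 0⟩ = 0
  rk_one : rk ⟨1, 1, 1⟩ = 1
  rk_mul_le_left : ∀ {n m k : ℕ} (A : Matrix (Fin n) (Fin m) R) (B : Matrix (Fin m) (Fin k) R),
      rk ⟨n, k, A * B⟩ ≤ rk ⟨n, m, A⟩
  rk_mul_le_right : ∀ {n m k : ℕ} (A : Matrix (Fin n) (Fin m) R) (B : Matrix (Fin m) (Fin k) R),
      rk ⟨n, k, A * B⟩ ≤ rk ⟨m, k, B⟩
  rk_diag : ∀ {p q r s : ℕ} (A : Matrix (Fin p) (Fin r) R) (B : Matrix (Fin q) (Fin s) R),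
      rk (blockSig A 0 B) = rk ⟨p, r, A⟩ + rk ⟨q, s, B⟩
  rk_block_ge : ∀ {p q r s : ℕ} (A : Matrix (Fin p) (Fin r) R) (E : Matrix (Fin p) (Fin s) R)
      (B : Matrix (Fin q) (Fin s) R), rk ⟨p, r, A⟩ + rk ⟨q, s, B⟩ ≤ rk (blockSig A E B)

/-- The rank of a ring element, viewed as a `1 × 1` matrix. -/
noncomputable def SylvesterRank.rk1 {R : Type} [Ring R] (f : SylvesterRank R) (a : R) : ℝ :=
  f.rk ⟨1, 1, Matrix.of fun _ _ => a⟩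

open Matrix in
/-- A multiplication `MStep` between reindexed `Fin n ⊕ Fin n` square matrices. -/
lemma mstep_mul_aux {R : Type} [Ring R] {n : ℕ}
    (X Y C D : Matrix (Fin n ⊕ Fin n) (Fin n ⊕ Fin n) R) (h : X = C * Y * D) :
    MStep (R := R) ⟨n + n, n + n, Matrix.reindex finSumFinEquiv finSumFinEquiv X⟩
      ⟨n + n, n + n, Matrix.reindex finSumFinEquiv finSumFinEquiv Y⟩ := by
  refine Or.inl ⟨Matrix.reindex finSumFinEquiv finSumFinEquiv C,
    Matrix.reindex finSumFinEquiv finSumFinEquiv D, ?_⟩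
  subst h
  simp only [Matrix.reindex_apply, Matrix.submatrix_mul_equiv]

/-- Lemma (compare powers): for a square matrix `A` over a unital ring `R` and integers
`0 ≤ k ≤ j`, `0 < m`, one has `diag(A^j, A^{k+m}) ≼_M diag(A^k, A^{j+m})`. -/
theorem stmt_2 {R : Type} [Ring R] {n : ℕ} (A : Matrix (Fin n) (Fin n) R)
    (k j m : ℕ) (hkj : k ≤ j) (hm : 0 < m) :
    Msub (blockSig (A ^ j) 0 (A ^ (k + m))) (blockSig (A ^ k) 0 (A ^ (j + m))) := by
  have hjk : j - k + k = j := Nat.sub_add_cancel hkj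
  -- chain: diag(A^j, A^{k+m}) → diag(-A^{k+m}, A^j) → [[-A^{k+m}, A^k],[0, A^j]]
  --   → [[A^{j+m}, A^j],[0, A^k]] → diag(A^k, A^{j+m})
  have s1 : MStep (R := R) (blockSig (A ^ j) 0 (A ^ (k + m)))
      (blockSig (-(A ^ (k + m))) 0 (A ^ j)) := by
    refine mstep_mul_aux _ _ (Matrix.fromBlocks 0 1 1 0) (Matrix.fromBlocks 0 (-1) 1 0) ?_
    simp [Matrix.fromBlocks_multiply]
  have s2 : MStep (R := R) (blockSig (-(A ^ (k + m))) 0 (A ^ j))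
      (blockSig (-(A ^ (k + m))) (A ^ k) (A ^ j)) :=
    Or.inr ⟨n, n, n, n, -(A ^ (k + m)), A ^ k, A ^ j, rfl, rfl⟩
  have s3 : MStep (R := R) (blockSig (-(A ^ (k + m))) (A ^ k) (A ^ j))
      (blockSig (A ^ (j + m)) (A ^ j) (A ^ k)) := by
    refine mstep_mul_aux _ _ (Matrix.fromBlocks 0 1 1 0)
      (Matrix.fromBlocks 1 0 (-(A ^ m)) 1) ?_
    simp [Matrix.fromBlocks_multiply, ← pow_add]
  have s4 : MStep (R := R) (blockSig (A ^ (j + m)) (A ^ j) (A ^ k))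
      (blockSig (A ^ k) 0 (A ^ (j + m))) := by
    refine mstep_mul_aux _ _ (Matrix.fromBlocks (A ^ (j - k)) 1 1 0)
      (Matrix.fromBlocks 0 1 1 0) ?_
    simp [Matrix.fromBlocks_multiply, ← pow_add, hjk]
  exact .head s1 (.head s2 (.head s3 (.head s4 .refl)))
end

section
/- Let R be a unital ring. Then R has a Sylvester matrix rank function if and only if for every n ∈ ℕ, the identity matrix I_{n+1} is not Malcolmson subequivalent to I_n. -/
/-!
A Sylvester rank function is monotone along `≼_M` and satisfies `rk I_n = n`, so it rules out
`I_{n+1} ≼_M I_n`.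

Conversely, in the free `ℚ`-vector space on all matrices let `P` be the cone spanned by
`[B] - [A]` for `A ≼_M B` and by `±([A ⊕ B] - [A] - [B])`. A `ℚ`-linear functional that is
nonnegative on `P` and takes the value `1` at `[I_1]` is a Sylvester rank function. Since `[I_1]`
is an order unit for `P`, the M. Riesz extension theorem produces such a functional as soon as
`-[I_1] ∉ P`. Working over `ℚ` is what makes this last condition checkable: a rational cone
combination becomes an integral one after clearing denominators, hence a relation
`W ⊕ I_m ≼_M W` with `m > 0`, and absorbing `I_m` repeatedly forces `I_{t+2} ≼_M I_{t+1}`.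
-/

section

variable {a b c : ℕ} (h : a + b + c = a + (b + c))

@[simp] lemma Fin.cast_castAdd_castAdd (i : Fin a) :
    Fin.cast h (Fin.castAdd c (Fin.castAdd b i)) = Fin.castAdd (b + c) i := rfl

@[simp] lemma Fin.cast_castAdd_natAdd (i : Fin b) :
    Fin.cast h (Fin.castAdd c (Fin.natAdd a i)) = Fin.natAdd a (Fin.castAdd c i) := rfl

@[simp] lemma Fin.cast_natAdd_add (i : Fin c) :
    Fin.cast h (Fin.natAdd (a + b) i) = Fin.natAdd a (Fin.natAdd b i) :=
  Fin.ext (Nat.add_assoc ..)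

end

open Matrix

section BlockMatrices

variable {R : Type} [Ring R]

-- The matrix of `blockSig C E D`, with its dimensions `p + q`, `r + s` visible in its type.
def blockMat {p q r s : ℕ} (C : Matrix (Fin p) (Fin r) R) (E : Matrix (Fin p) (Fin s) R)
    (D : Matrix (Fin q) (Fin s) R) : Matrix (Fin (p + q)) (Fin (r + s)) R :=
  reindex finSumFinEquiv finSumFinEquiv (fromBlocks C E 0 D)

section Entries

variable {p q r s : ℕ} (C : Matrix (Fin p) (Fin r) R) (E : Matrix (Fin p) (Fin s) R)
  (D : Matrix (Fin q) (Fin s) R)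

@[simp] lemma blockMat_castAdd_castAdd (i : Fin p) (j : Fin r) :
    blockMat C E D (Fin.castAdd q i) (Fin.castAdd s j) = C i j := by
  simp [blockMat]

@[simp] lemma blockMat_castAdd_natAdd (i : Fin p) (j : Fin s) :
    blockMat C E D (Fin.castAdd q i) (Fin.natAdd r j) = E i j := by
  simp [blockMat]

@[simp] lemma blockMat_natAdd_castAdd (i : Fin q) (j : Fin r) :
    blockMat C E D (Fin.natAdd p i) (Fin.castAdd s j) = 0 := by
  simp [blockMat]

@[simp] lemma blockMat_natAdd_natAdd (i : Fin q) (j : Fin s) :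
    blockMat C E D (Fin.natAdd p i) (Fin.natAdd r j) = D i j := by
  simp [blockMat]

end Entries

lemma blockMat_one (a b : ℕ) :
    blockMat (1 : Matrix (Fin a) (Fin a) R) 0 (1 : Matrix (Fin b) (Fin b) R) = 1 := by
  simp [blockMat, fromBlocks_one]

lemma blockMat_mul_blockMat {a b c a' b' c' : ℕ}
    (M : Matrix (Fin a) (Fin b) R) (M' : Matrix (Fin a') (Fin b') R)
    (N : Matrix (Fin b) (Fin c) R) (N' : Matrix (Fin b') (Fin c') R) :
    blockMat M 0 M' * blockMat N 0 N' = blockMat (M * N) 0 (M' * N') := by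
  simp [blockMat, submatrix_mul_equiv, fromBlocks_multiply]

lemma blockMat_comm {a b c d : ℕ} (A : Matrix (Fin a) (Fin b) R) (B : Matrix (Fin c) (Fin d) R) :
    blockMat A 0 B = (blockMat B 0 A).submatrix finAddFlip finAddFlip := by
  ext i j
  induction i using Fin.addCases <;> induction j using Fin.addCases <;> simp

lemma blockMat_assoc {p q r s x y : ℕ} (C : Matrix (Fin p) (Fin r) R)
    (E : Matrix (Fin p) (Fin s) R) (D : Matrix (Fin q) (Fin s) R) (X : Matrix (Fin x) (Fin y) R) :
    blockMat (blockMat C E D) 0 X =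
      (blockMat C (of fun i => Fin.append (E i) 0) (blockMat D 0 X)).submatrix
        (finCongr (Nat.add_assoc p q x)) (finCongr (Nat.add_assoc r s y)) := by
  ext i j
  refine Fin.addCases (Fin.addCases (fun i => ?_) (fun i => ?_)) (fun i => ?_) i <;>
  refine Fin.addCases (Fin.addCases (fun j => ?_) (fun j => ?_)) (fun j => ?_) j <;>
  simp

lemma blockMat_empty_left {c d : ℕ} (C : Matrix (Fin 0) (Fin 0) R) (A : Matrix (Fin c) (Fin d) R) :
    blockMat C 0 A = A.submatrix (finCongr (Nat.zero_add c)) (finCongr (Nat.zero_add d)) := by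
  ext i j
  induction i using Fin.addCases with
  | left i => exact i.elim0
  | right i => induction j using Fin.addCases with
    | left j => exact j.elim0
    | right j => simp [-Fin.natAdd_zero]

lemma of_append_zero_zero (p s y : ℕ) :
    (of fun i => Fin.append ((0 : Matrix (Fin p) (Fin s) R) i) (0 : Fin y → R)) = 0 := by
  ext i j
  induction j using Fin.addCases <;> simp

end BlockMatrices

section Subequivalence

variable {R : Type} [Ring R]

def dsum (A B : MatSig R) : MatSig R := ⟨A.1 + B.1, A.2.1 + B.2.1, blockMat A.2.2 0 B.2.2⟩

infixl:65 " ⊕ₘ " => dsum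

def idSig (n : ℕ) : MatSig R := ⟨n, n, 1⟩

instance : IsTrans (MatSig R) Msub := ⟨fun _ _ _ => Relation.ReflTransGen.trans⟩

instance : Std.Refl (Msub (R := R)) := ⟨fun _ => Relation.ReflTransGen.refl⟩

lemma msub_of_eq_mul {a b n m : ℕ} {M : Matrix (Fin a) (Fin b) R} {N : Matrix (Fin n) (Fin m) R}
    (C : Matrix (Fin a) (Fin n) R) (D : Matrix (Fin m) (Fin b) R) (h : M = C * N * D) :
    Msub ⟨a, b, M⟩ ⟨n, m, N⟩ :=
  .single (.inl ⟨C, D, h⟩)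

lemma msub_submatrix {n m a b : ℕ} (M : Matrix (Fin n) (Fin m) R) (f : Fin a → Fin n)
    (g : Fin b → Fin m) : Msub ⟨a, b, M.submatrix f g⟩ ⟨n, m, M⟩ :=
  msub_of_eq_mul ((1 : Matrix (Fin n) (Fin n) R).submatrix f id)
    ((1 : Matrix (Fin m) (Fin m) R).submatrix id g) (by ext; simp [mul_apply, one_apply])

lemma antisymmRel_submatrix {n m a b : ℕ} (M : Matrix (Fin n) (Fin m) R) (σ : Fin a ≃ Fin n)
    (τ : Fin b ≃ Fin m) : AntisymmRel Msub ⟨a, b, M.submatrix σ τ⟩ ⟨n, m, M⟩ := by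
  refine ⟨msub_submatrix M σ τ, ?_⟩
  simpa using msub_submatrix (M.submatrix σ τ) σ.symm τ.symm

lemma dsum_comm (A B : MatSig R) : AntisymmRel Msub (A ⊕ₘ B) (B ⊕ₘ A) := by
  rw [dsum, blockMat_comm]
  exact antisymmRel_submatrix _ _ _

lemma idSig_zero_dsum (A : MatSig R) : AntisymmRel Msub (idSig 0 ⊕ₘ A) A := by
  rw [dsum, idSig, blockMat_empty_left]
  exact antisymmRel_submatrix _ _ _

lemma blockSig_dsum {p q r s : ℕ} (C : Matrix (Fin p) (Fin r) R)
    (E : Matrix (Fin p) (Fin s) R) (D : Matrix (Fin q) (Fin s) R) (X : MatSig R) :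
    AntisymmRel Msub (blockSig C E D ⊕ₘ X)
      (blockSig C (of fun i => Fin.append (E i) 0) (blockMat D 0 X.2.2)) := by
  change AntisymmRel Msub ⟨_, _, blockMat (blockMat C E D) 0 X.2.2⟩ _
  rw [blockMat_assoc]
  exact antisymmRel_submatrix _ _ _

lemma blockSig_zero_dsum {p q r s : ℕ} (C : Matrix (Fin p) (Fin r) R)
    (D : Matrix (Fin q) (Fin s) R) (X : MatSig R) :
    AntisymmRel Msub (blockSig C 0 D ⊕ₘ X) (blockSig C 0 (blockMat D 0 X.2.2)) := by
  simpa only [of_append_zero_zero] using blockSig_dsum C 0 D X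

lemma dsum_assoc (A B C : MatSig R) : AntisymmRel Msub (A ⊕ₘ B ⊕ₘ C) (A ⊕ₘ (B ⊕ₘ C)) :=
  blockSig_zero_dsum A.2.2 B.2.2 C

lemma msub_dsum_right {A B : MatSig R} (h : Msub A B) (X : MatSig R) : Msub (A ⊕ₘ X) (B ⊕ₘ X) := by
  induction h with
  | refl => exact .refl
  | @tail B B' _ hstep ih =>
    refine ih.trans ?_
    rcases hstep with ⟨C, D, hmul⟩ | ⟨p, q, r, s, C, E, D, rfl, rfl⟩
    · refine msub_of_eq_mul (blockMat C 0 1) (blockMat D 0 1) ?_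
      rw [blockMat_mul_blockMat, blockMat_mul_blockMat, Matrix.one_mul, Matrix.mul_one, hmul]
    · -- `[[C, 0], [0, D]] ⊕ X` and `[[C, E], [0, D]] ⊕ X` both have the shape
      -- `[[C, *], [0, D ⊕ X]]`
      have hstep : MStep (blockSig C 0 (blockMat D 0 X.2.2))
          (blockSig C (of fun i => Fin.append (E i) 0) (blockMat D 0 X.2.2)) :=
        .inr ⟨_, _, _, _, _, _, _, rfl, rfl⟩
      exact ((blockSig_zero_dsum C D X).1.tail hstep).trans (blockSig_dsum C E D X).2

lemma msub_dsum_left (X : MatSig R) {A B : MatSig R} (h : Msub A B) : Msub (X ⊕ₘ A) (X ⊕ₘ B) :=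
  ((dsum_comm X A).1.trans (msub_dsum_right h X)).trans (dsum_comm B X).1

lemma msub_dsum {A B A' B' : MatSig R} (h : Msub A B) (h' : Msub A' B') :
    Msub (A ⊕ₘ A') (B ⊕ₘ B') :=
  (msub_dsum_right h A').trans (msub_dsum_left B h')

lemma antisymmRel_dsum_left (X : MatSig R) {A B : MatSig R} (h : AntisymmRel Msub A B) :
    AntisymmRel Msub (X ⊕ₘ A) (X ⊕ₘ B) :=
  ⟨msub_dsum_left X h.1, msub_dsum_left X h.2⟩

lemma idSig_dsum_idSig (a b : ℕ) : (idSig a ⊕ₘ idSig b : MatSig R) = idSig (a + b) := by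
  rw [dsum, idSig, idSig, blockMat_one]
  rfl

lemma msub_idSig (A : MatSig R) : Msub A (idSig A.2.1) :=
  msub_of_eq_mul A.2.2 1 (by rw [Matrix.mul_one, Matrix.mul_one])

lemma idSig_zero_msub (A : MatSig R) : Msub (idSig 0) A :=
  msub_of_eq_mul 0 0 (Subsingleton.elim _ _)

lemma msub_idSig_of_le {a b : ℕ} (h : a ≤ b) : Msub (idSig a : MatSig R) (idSig b) := by
  have hsub := msub_submatrix (1 : Matrix (Fin b) (Fin b) R) (Fin.castLE h) (Fin.castLE h)
  rwa [submatrix_one _ (Fin.castLE_injective h)] at hsub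

lemma msub_dsum_self (A B : MatSig R) : Msub B (A ⊕ₘ B) := by
  have h := msub_submatrix (blockMat A.2.2 0 B.2.2) (Fin.natAdd A.1) (Fin.natAdd A.2.1)
  rwa [show (blockMat A.2.2 0 B.2.2).submatrix (Fin.natAdd A.1) (Fin.natAdd A.2.1) = B.2.2 by
    ext; simp] at h

def bigDsum (L : List (MatSig R)) : MatSig R := L.foldr dsum (idSig 0)

lemma bigDsum_append (S T : List (MatSig R)) :
    AntisymmRel Msub (bigDsum (S ++ T)) (bigDsum S ⊕ₘ bigDsum T) := by
  induction S with
  | nil => exact (idSig_zero_dsum _).symm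
  | cons A S ih => exact (antisymmRel_dsum_left A ih).trans (dsum_assoc _ _ _).symm

lemma bigDsum_perm {S T : List (MatSig R)} (h : S.Perm T) :
    AntisymmRel Msub (bigDsum S) (bigDsum T) := by
  induction h with
  | nil => exact .refl _ _
  | cons A _ ih => exact antisymmRel_dsum_left A ih
  | swap A B L =>
    have hswap : AntisymmRel Msub (B ⊕ₘ A ⊕ₘ bigDsum L) (A ⊕ₘ B ⊕ₘ bigDsum L) :=
      ⟨msub_dsum_right (dsum_comm B A).1 _, msub_dsum_right (dsum_comm A B).1 _⟩
    exact ((dsum_assoc B A _).symm.trans hswap).trans (dsum_assoc A B _)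
  | trans _ _ ih ih' => exact ih.trans ih'

lemma bigDsum_replicate_idSig_one (m : ℕ) :
    bigDsum (List.replicate m (idSig 1)) = (idSig m : MatSig R) := by
  induction m with
  | zero => rfl
  | succ m ih =>
    rw [List.replicate_succ, bigDsum, List.foldr_cons, ← bigDsum, ih, idSig_dsum_idSig,
      Nat.add_comm]

/-- If `W ⊕ I_m ≼ W` then `W` absorbs `I_{mk}` for every `k`, and `W ≼ I_t` for `t` its number
of columns, so `I_{t+2} ≼ I_{mk} ≼ W ⊕ I_{mk} ≼ W ≼ I_t ≼ I_{t+1}` once `mk ≥ t + 2`. -/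
lemma exists_idSig_succ_msub_of_absorb {W : MatSig R} {m : ℕ} (hm : 0 < m)
    (h : Msub (W ⊕ₘ idSig m) W) : ∃ n, 0 < n ∧ Msub (idSig (n + 1) : MatSig R) (idSig n) := by
  have absorb : ∀ k, Msub (W ⊕ₘ idSig (m * (k + 1))) W := by
    intro k
    induction k with
    | zero => simpa using h
    | succ k ih =>
      have hsplit : W ⊕ₘ idSig (m * (k + 1 + 1)) = W ⊕ₘ (idSig m ⊕ₘ idSig (m * (k + 1))) := by
        rw [idSig_dsum_idSig]; ring_nf
      rw [hsplit]
      exact ((dsum_assoc _ _ _).2.trans (msub_dsum_right h _)).trans ih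
  refine ⟨W.2.1 + 1, by omega, ?_⟩
  have hbig : W.2.1 + 2 ≤ m * (W.2.1 + 1 + 1) := by nlinarith
  exact ((((msub_idSig_of_le hbig).trans (msub_dsum_self W _)).trans (absorb _)).trans
    (msub_idSig W)).trans (msub_idSig_of_le (Nat.le_succ _))

end Subequivalence

namespace PointedCone

variable {E : Type*} [AddCommGroup E] [Module ℚ E]

lemma exists_nsmul_mem_closure_of_mem_hull {s : Set E} {x : E} (hx : x ∈ hull ℚ s) :
    ∃ m : ℕ, 0 < m ∧ m • x ∈ AddSubmonoid.closure s := by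
  induction hx using Submodule.span_induction with
  | mem x hx => exact ⟨1, one_pos, by simpa using AddSubmonoid.subset_closure hx⟩
  | zero => exact ⟨1, one_pos, by simp⟩
  | add x y _ _ hx hy =>
    obtain ⟨m, hm, hmx⟩ := hx
    obtain ⟨n, hn, hny⟩ := hy
    refine ⟨m * n, Nat.mul_pos hm hn, ?_⟩
    rw [smul_add, mul_smul, mul_smul, smul_comm m n x]
    exact add_mem (nsmul_mem hmx n) (nsmul_mem hny m)
  | smul c x _ hx =>
    obtain ⟨m, hm, hmx⟩ := hx
    obtain ⟨c, hc⟩ := c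
    refine ⟨c.den * m, Nat.mul_pos c.den_pos hm, ?_⟩
    have hnum : ((c.num.toNat : ℕ) : ℚ) = c.num := by
      exact_mod_cast Int.toNat_of_nonneg (Rat.num_nonneg.2 hc)
    have key : (c.den * m) • (c • x) = c.num.toNat • m • x := by
      rw [← Nat.cast_smul_eq_nsmul ℚ, smul_smul, ← Nat.cast_smul_eq_nsmul ℚ c.num.toNat,
        ← Nat.cast_smul_eq_nsmul ℚ m, smul_smul, hnum, ← Rat.mul_den_eq_num]
      push_cast
      ring_nf
    change (c.den * m) • (c • x) ∈ _
    rw [key]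
    exact nsmul_mem hmx _

variable {s : PointedCone ℚ E}

lemma exists_separating_value (f : E →ₗ.[ℚ] ℝ)
    (nonneg : ∀ x : f.domain, (x : E) ∈ s → 0 ≤ f x)
    (dense : ∀ y, ∃ x : f.domain, (x : E) + y ∈ s) (y : E) :
    ∃ c : ℝ, (∀ x : f.domain, -(x : E) - y ∈ s → f x ≤ c) ∧
      ∀ x : f.domain, (x : E) + y ∈ s → c ≤ f x := by
  have hsep : ∀ x x' : f.domain, -(x : E) - y ∈ s → (x' : E) + y ∈ s → f x ≤ f x' := by
    intro x x' hx hx'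
    have hdiff : ((x' - x : f.domain) : E) ∈ s := by
      convert s.add_mem hx' hx using 1
      push_cast
      abel
    have h := nonneg _ hdiff
    rwa [LinearPMap.map_sub, sub_nonneg] at h
  obtain ⟨xl, hxl⟩ := dense (-y)
  obtain ⟨c, hc_upper, hc_lower⟩ := exists_between_of_forall_le
    (s := f '' {x | -(x : E) - y ∈ s}) (t := f '' {x | (x : E) + y ∈ s})
    (Set.Nonempty.image f ⟨-xl, by simpa [sub_eq_add_neg] using hxl⟩)
    (Set.Nonempty.image f (dense y))
    (by rintro _ ⟨x, hx, rfl⟩ _ ⟨x', hx', rfl⟩; exact hsep x x' hx hx')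
  exact ⟨c, fun x hx => hc_upper ⟨x, hx, rfl⟩, fun x hx => hc_lower ⟨x, hx, rfl⟩⟩

open Submodule in
theorem exists_nonneg_extension_step (f : E →ₗ.[ℚ] ℝ)
    (nonneg : ∀ x : f.domain, (x : E) ∈ s → 0 ≤ f x)
    (dense : ∀ y, ∃ x : f.domain, (x : E) + y ∈ s) {y : E} (hy : y ∉ f.domain) :
    ∃ g, f < g ∧ ∀ x : g.domain, (x : E) ∈ s → 0 ≤ g x := by
  obtain ⟨c, le_c, c_le⟩ := exists_separating_value f nonneg dense y
  refine ⟨f.supSpanSingleton y (-c) hy, ?_, ?_⟩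
  · refine lt_of_le_of_ne (f.left_le_sup _ _) fun H => hy ?_
    rw [H, LinearPMap.domain_supSpanSingleton]
    exact mem_sup_right (mem_span_singleton_self y)
  · rintro ⟨z, hz⟩ hzs
    obtain ⟨x, hx, _, hy', rfl⟩ := mem_sup.1 hz
    obtain ⟨r, rfl⟩ := mem_span_singleton.1 hy'
    rw [LinearPMap.supSpanSingleton_apply_mk _ _ _ _ _ hx, smul_neg, ← sub_eq_add_neg, sub_nonneg]
    rcases lt_trichotomy r 0 with hr | rfl | hr
    · have hmem : -((r⁻¹ • ⟨x, hx⟩ : f.domain) : E) - y ∈ s := by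
        convert s.smul_mem (neg_nonneg.2 (inv_nonpos.2 hr.le)) hzs using 1
        simp [smul_add, smul_smul, hr.ne]
        abel
      have hle := le_c _ hmem
      rw [LinearPMap.map_smul, Rat.smul_def, Rat.cast_inv] at hle
      have hr' : (r : ℝ) < 0 := by exact_mod_cast hr
      calc (RingHom.id ℚ r) • c = (r : ℝ) * c := Rat.smul_def _ _
        _ ≤ r * ((r : ℝ)⁻¹ * f ⟨x, hx⟩) := mul_le_mul_of_nonpos_left hle hr'.le
        _ = f ⟨x, hx⟩ := by rw [← mul_assoc, mul_inv_cancel₀ hr'.ne, one_mul]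
    · simpa using nonneg _ (by simpa using hzs)
    · have hmem : ((r⁻¹ • ⟨x, hx⟩ : f.domain) : E) + y ∈ s := by
        convert s.smul_mem (inv_nonneg.2 hr.le) hzs using 1
        simp [smul_add, smul_smul, hr.ne']
      have hle := c_le _ hmem
      rw [LinearPMap.map_smul, Rat.smul_def, Rat.cast_inv] at hle
      have hr' : (0 : ℝ) < r := by exact_mod_cast hr
      calc (RingHom.id ℚ r) • c = (r : ℝ) * c := Rat.smul_def _ _
        _ ≤ r * ((r : ℝ)⁻¹ * f ⟨x, hx⟩) := mul_le_mul_of_nonneg_left hle hr'.le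
        _ = f ⟨x, hx⟩ := by rw [← mul_assoc, mul_inv_cancel₀ hr'.ne', one_mul]

theorem exists_nonneg_extension_domain_eq_top (f : E →ₗ.[ℚ] ℝ)
    (nonneg : ∀ x : f.domain, (x : E) ∈ s → 0 ≤ f x)
    (dense : ∀ y, ∃ x : f.domain, (x : E) + y ∈ s) :
    ∃ g ≥ f, g.domain = ⊤ ∧ ∀ x : g.domain, (x : E) ∈ s → 0 ≤ g x := by
  let S := {g : E →ₗ.[ℚ] ℝ | ∀ x : g.domain, (x : E) ∈ s → 0 ≤ g x}
  have chain_bdd : ∀ c ⊆ S, IsChain (· ≤ ·) c → ∀ g ∈ c, ∃ ub ∈ S, ∀ h ∈ c, h ≤ ub := by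
    intro c hcS hchain g hg
    have hdir : DirectedOn (· ≤ ·) c := hchain.directedOn
    refine ⟨LinearPMap.sSup c hdir, fun x hxs => ?_, fun h hh => LinearPMap.le_sSup hdir hh⟩
    obtain ⟨h, hh, hxh⟩ := (LinearPMap.mem_domain_sSup_iff ⟨g, hg⟩ hdir).1 x.2
    exact (hcS hh ⟨x, hxh⟩ hxs).trans_eq (LinearPMap.sSup_apply hdir hh ⟨x, hxh⟩).symm
  obtain ⟨g, hfg, hgS, hmax⟩ := zorn_le_nonempty₀ S chain_bdd f nonneg
  refine ⟨g, hfg, ?_, hgS⟩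
  by_contra hg
  obtain ⟨y, -, hy⟩ := SetLike.exists_of_lt (lt_top_iff_ne_top.2 hg)
  have gdense : ∀ y, ∃ x : g.domain, (x : E) + y ∈ s := fun y =>
    let ⟨x, hx⟩ := dense y
    ⟨Submodule.inclusion hfg.1 x, hx⟩
  obtain ⟨g', hgg', hg'S⟩ := exists_nonneg_extension_step g hgS gdense hy
  exact hgg'.not_ge (hmax hg'S hgg'.le)

/-- M. Riesz extension over `ℚ` (`riesz_extension` is only available over `ℝ`): an ordered
`ℚ`-vector space with order unit `u` has a state. -/
theorem exists_nonneg_linearMap_of_isOrderUnit {u : E} (hu : ∀ x, ∃ c : ℚ, c • u - x ∈ s)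
    (hneg : -u ∉ s) : ∃ φ : E →ₗ[ℚ] ℝ, (∀ x ∈ s, 0 ≤ φ x) ∧ φ u = 1 := by
  have hu0 : u ≠ 0 := by rintro rfl; exact hneg (by simp)
  let f : E →ₗ.[ℚ] ℝ := LinearPMap.mkSpanSingleton u 1 hu0
  have f_nonneg : ∀ x : f.domain, (x : E) ∈ s → 0 ≤ f x := by
    rintro ⟨x, hx⟩ hxs
    obtain ⟨c, rfl⟩ := Submodule.mem_span_singleton.1 hx
    rw [show f ⟨c • u, hx⟩ = c • (1 : ℝ) from LinearPMap.mkSpanSingleton'_apply _ _ _ c _,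
      Rat.smul_def, mul_one, Rat.cast_nonneg]
    by_contra! hc
    refine hneg ?_
    simpa [smul_smul, hc.ne] using s.smul_mem (inv_nonneg.2 (neg_nonneg.2 hc.le)) hxs
  have f_dense : ∀ y, ∃ x : f.domain, (x : E) + y ∈ s := fun y =>
    let ⟨c, hc⟩ := hu (-y)
    ⟨⟨c • u, Submodule.smul_mem _ _ (Submodule.mem_span_singleton_self u)⟩, by simpa using hc⟩
  obtain ⟨g, hfg, hg, hgs⟩ := exists_nonneg_extension_domain_eq_top f f_nonneg f_dense
  refine ⟨g.toFun.comp (LinearMap.id.codRestrict g.domain fun x => hg ▸ trivial),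
    fun x hx => hgs _ hx, ?_⟩
  exact (hfg.2 rfl).symm.trans (LinearPMap.mkSpanSingleton_apply ℚ ℚ hu0 (1 : ℝ))

end PointedCone

section RankCone

variable {R : Type} [Ring R]

noncomputable def freeVec (A : MatSig R) : MatSig R →₀ ℚ := Finsupp.single A 1

noncomputable def listVec (L : List (MatSig R)) : MatSig R →₀ ℚ := (L.map freeVec).sum

lemma listVec_append (S T : List (MatSig R)) : listVec (S ++ T) = listVec S + listVec T := by
  simp [listVec]

lemma listVec_replicate (m : ℕ) (A : MatSig R) :
    listVec (List.replicate m A) = (m : ℚ) • freeVec A := by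
  simp [listVec, Nat.cast_smul_eq_nsmul]

lemma listVec_apply [DecidableEq (MatSig R)] (L : List (MatSig R)) (A : MatSig R) :
    listVec L A = L.count A := by
  induction L with
  | nil => simp [listVec]
  | cons B L ih =>
    simp only [listVec, List.map_cons, List.sum_cons, Finsupp.add_apply] at ih ⊢
    rw [ih, List.count_cons, freeVec, Finsupp.single_apply]
    split_ifs <;> simp_all [add_comm]

lemma perm_of_listVec_eq {S T : List (MatSig R)} (h : listVec S = listVec T) : S.Perm T := by
  classical
  refine List.perm_iff_count.2 fun A => ?_
  have hA := congrArg (· A) h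
  simp only [listVec_apply] at hA
  exact_mod_cast hA

def rankRelations (R : Type) [Ring R] : Set (MatSig R →₀ ℚ) :=
  {x | ∃ A B, Msub A B ∧ x = freeVec B - freeVec A} ∪
    {x | ∃ A B, x = freeVec (A ⊕ₘ B) - freeVec A - freeVec B} ∪
    {x | ∃ A B, x = freeVec A + freeVec B - freeVec (A ⊕ₘ B)}

noncomputable def rankCone (R : Type) [Ring R] : PointedCone ℚ (MatSig R →₀ ℚ) :=
  PointedCone.hull ℚ (rankRelations R)

lemma sub_freeVec_mem_rankCone {A B : MatSig R} (h : Msub A B) :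
    freeVec B - freeVec A ∈ rankCone R :=
  PointedCone.subset_hull (Or.inl (Or.inl ⟨A, B, h, rfl⟩))

lemma freeVec_dsum_sub_mem_rankCone (A B : MatSig R) :
    freeVec (A ⊕ₘ B) - freeVec A - freeVec B ∈ rankCone R :=
  PointedCone.subset_hull (Or.inl (Or.inr ⟨A, B, rfl⟩))

lemma sub_freeVec_dsum_mem_rankCone (A B : MatSig R) :
    freeVec A + freeVec B - freeVec (A ⊕ₘ B) ∈ rankCone R :=
  PointedCone.subset_hull (Or.inr ⟨A, B, rfl⟩)

lemma neg_freeVec_idSig_zero_mem_rankCone : -freeVec (idSig 0 : MatSig R) ∈ rankCone R := by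
  simpa [idSig_dsum_idSig] using freeVec_dsum_sub_mem_rankCone (idSig 0 : MatSig R) (idSig 0)

lemma freeVec_mem_rankCone (A : MatSig R) : freeVec A ∈ rankCone R := by
  have h := sub_freeVec_dsum_mem_rankCone (idSig 0 : MatSig R) (idSig 0)
  rw [idSig_dsum_idSig, add_sub_cancel_right] at h
  simpa using add_mem (sub_freeVec_mem_rankCone (idSig_zero_msub A)) h

lemma smul_freeVec_idSig_one_sub_mem_rankCone (n : ℕ) :
    (n : ℚ) • freeVec (idSig 1 : MatSig R) - freeVec (idSig n) ∈ rankCone R := by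
  induction n with
  | zero => simpa using neg_freeVec_idSig_zero_mem_rankCone
  | succ n ih =>
    have h := add_mem ih (sub_freeVec_dsum_mem_rankCone (idSig n : MatSig R) (idSig 1))
    rw [idSig_dsum_idSig] at h
    convert h using 1
    push_cast
    rw [add_smul, one_smul]
    abel

lemma exists_smul_sub_mem_rankCone (x : MatSig R →₀ ℚ) :
    ∃ c : ℚ, c • freeVec (idSig 1 : MatSig R) - x ∈ rankCone R := by
  induction x using Finsupp.induction_linear with
  | zero => exact ⟨0, by simp⟩
  | add x y hx hy =>
    obtain ⟨c, hc⟩ := hx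
    obtain ⟨d, hd⟩ := hy
    refine ⟨c + d, ?_⟩
    convert add_mem hc hd using 1
    rw [add_smul]
    abel
  | single A b =>
    have hsingle : Finsupp.single A b = b • freeVec A := by simp [freeVec]
    rcases le_or_gt 0 b with hb | hb
    · -- `[A] ≤ [I_k] ≤ k [I_1]` where `k` is the number of columns of `A`
      have h := add_mem (sub_freeVec_mem_rankCone (msub_idSig A))
        (smul_freeVec_idSig_one_sub_mem_rankCone A.2.1)
      refine ⟨b * A.2.1, ?_⟩
      convert (rankCone R).smul_mem hb h using 1
      rw [hsingle, smul_add, smul_sub, smul_sub, smul_smul]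
      abel
    · refine ⟨0, ?_⟩
      convert (rankCone R).smul_mem (neg_nonneg.2 hb.le) (freeVec_mem_rankCone A) using 1
      simp [hsingle]

lemma exists_msub_of_mem_closure {x : MatSig R →₀ ℚ}
    (hx : x ∈ AddSubmonoid.closure (rankRelations R)) :
    ∃ S T, x = listVec T - listVec S ∧ Msub (bigDsum S) (bigDsum T) := by
  induction hx using AddSubmonoid.closure_induction with
  | mem x hx =>
    rcases hx with (⟨A, B, hAB, rfl⟩ | ⟨A, B, rfl⟩) | ⟨A, B, rfl⟩
    · exact ⟨[A], [B], by simp [listVec], msub_dsum_right hAB _⟩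
    · exact ⟨[A, B], [A ⊕ₘ B], by simp [listVec]; abel, (dsum_assoc _ _ _).2⟩
    · exact ⟨[A ⊕ₘ B], [A, B], by simp [listVec], (dsum_assoc _ _ _).1⟩
  | zero => exact ⟨[], [], by simp [listVec], .refl⟩
  | add x y _ _ hx hy =>
    obtain ⟨S, T, rfl, hST⟩ := hx
    obtain ⟨S', T', rfl, hST'⟩ := hy
    refine ⟨S ++ S', T ++ T', by rw [listVec_append, listVec_append]; abel, ?_⟩
    exact ((bigDsum_append S S').1.trans (msub_dsum hST hST')).trans (bigDsum_append T T').2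

/-- Clearing denominators, `-[I_1]` in the cone would give lists `S`, `T` of matrices with
`⊕S ≼ ⊕T` and `S = T + m • [I_1]` as multisets, that is, `⊕T ⊕ I_m ≼ ⊕T`. -/
lemma neg_freeVec_idSig_one_not_mem
    (h : ∀ n, 0 < n → ¬ Msub (idSig (n + 1) : MatSig R) (idSig n)) :
    -freeVec (idSig 1 : MatSig R) ∉ rankCone R := by
  intro hmem
  obtain ⟨m, hm, hmx⟩ := PointedCone.exists_nsmul_mem_closure_of_mem_hull hmem
  obtain ⟨S, T, hST, hmsub⟩ := exists_msub_of_mem_closure hmx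
  have hperm : S.Perm (T ++ List.replicate m (idSig 1)) := by
    refine perm_of_listVec_eq ?_
    rw [listVec_append, listVec_replicate, Nat.cast_smul_eq_nsmul, ← sub_neg_eq_add, ← smul_neg,
      hST]
    abel
  have habsorb : Msub (bigDsum T ⊕ₘ idSig m) (bigDsum T) := by
    rw [← bigDsum_replicate_idSig_one]
    exact ((bigDsum_append _ _).2.trans (bigDsum_perm hperm).2).trans hmsub
  obtain ⟨n, hn, hn'⟩ := exists_idSig_succ_msub_of_absorb hm habsorb
  exact h n hn hn'

lemma map_freeVec_le_of_msub {φ : (MatSig R →₀ ℚ) →ₗ[ℚ] ℝ}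
    (hφ : ∀ x ∈ rankCone R, 0 ≤ φ x) {A B : MatSig R} (h : Msub A B) :
    φ (freeVec A) ≤ φ (freeVec B) := by
  simpa [sub_nonneg] using hφ _ (sub_freeVec_mem_rankCone h)

lemma map_freeVec_dsum {φ : (MatSig R →₀ ℚ) →ₗ[ℚ] ℝ}
    (hφ : ∀ x ∈ rankCone R, 0 ≤ φ x) (A B : MatSig R) :
    φ (freeVec (A ⊕ₘ B)) = φ (freeVec A) + φ (freeVec B) := by
  have h₁ := hφ _ (freeVec_dsum_sub_mem_rankCone A B)
  have h₂ := hφ _ (sub_freeVec_dsum_mem_rankCone A B)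
  simp only [map_sub, map_add] at h₁ h₂
  linarith

end RankCone

namespace SylvesterRank

variable {R : Type} [Ring R]

noncomputable def ofFunctional (φ : (MatSig R →₀ ℚ) →ₗ[ℚ] ℝ)
    (hφ : ∀ x ∈ rankCone R, 0 ≤ φ x) (hφ₁ : φ (freeVec (idSig 1 : MatSig R)) = 1) :
    SylvesterRank R where
  rk A := φ (freeVec A)
  rk_nonneg A := hφ _ (freeVec_mem_rankCone A)
  rk_zero := by
    have hle := map_freeVec_le_of_msub hφ (msub_of_eq_mul (M := (0 : Matrix (Fin 1) (Fin 1) R))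
      (N := (1 : Matrix (Fin 0) (Fin 0) R)) 0 0 (by simp))
    have hzero := hφ _ neg_freeVec_idSig_zero_mem_rankCone
    have hnonneg := hφ _ (freeVec_mem_rankCone (⟨1, 1, 0⟩ : MatSig R))
    rw [map_neg] at hzero
    exact le_antisymm (hle.trans (neg_nonneg.1 hzero)) hnonneg
  rk_one := hφ₁
  rk_mul_le_left A B := map_freeVec_le_of_msub hφ (msub_of_eq_mul 1 B (by rw [Matrix.one_mul]))
  rk_mul_le_right A B := map_freeVec_le_of_msub hφ (msub_of_eq_mul A 1 (by rw [Matrix.mul_one]))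
  rk_diag A B := map_freeVec_dsum hφ ⟨_, _, A⟩ ⟨_, _, B⟩
  rk_block_ge A E B := (map_freeVec_dsum hφ ⟨_, _, A⟩ ⟨_, _, B⟩).symm.trans_le
    (map_freeVec_le_of_msub hφ (.single (.inr ⟨_, _, _, _, A, E, B, rfl, rfl⟩)))

lemma rk_le_of_msub (f : SylvesterRank R) {A B : MatSig R} (h : Msub A B) : f.rk A ≤ f.rk B := by
  induction h with
  | refl => exact le_rfl
  | @tail B B' _ hstep ih =>
    refine ih.trans ?_
    rcases hstep with ⟨C, D, hmul⟩ | ⟨p, q, r, s, C, E, D, rfl, rfl⟩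
    · calc f.rk B = f.rk ⟨B.1, B.2.1, C * B'.2.2 * D⟩ := by rw [← hmul]
        _ ≤ f.rk ⟨B.1, B'.2.1, C * B'.2.2⟩ := f.rk_mul_le_left _ D
        _ ≤ f.rk B' := f.rk_mul_le_right C _
    · exact (f.rk_diag C D).trans_le (f.rk_block_ge C E D)

lemma rk_idSig (f : SylvesterRank R) (n : ℕ) : f.rk (idSig n) = n := by
  have hzero : f.rk (idSig 0) = 0 := by
    have h := f.rk_diag (1 : Matrix (Fin 0) (Fin 0) R) (1 : Matrix (Fin 0) (Fin 0) R)
    change f.rk (idSig 0 ⊕ₘ idSig 0) = f.rk (idSig 0) + f.rk (idSig 0) at h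
    rw [idSig_dsum_idSig, Nat.add_zero] at h
    linarith
  induction n with
  | zero => simpa using hzero
  | succ n ih =>
    have h := f.rk_diag (1 : Matrix (Fin n) (Fin n) R) (1 : Matrix (Fin 1) (Fin 1) R)
    change f.rk (idSig n ⊕ₘ idSig 1) = f.rk (idSig n) + f.rk (idSig 1) at h
    rw [idSig_dsum_idSig, ih, show f.rk (idSig 1) = 1 from f.rk_one] at h
    exact_mod_cast h

end SylvesterRank

theorem stmt_3_general {R : Type} [Ring R] :
    Nonempty (SylvesterRank R) ↔
      ∀ n : ℕ, 0 < n → ¬ Msub (⟨n + 1, n + 1, (1 : Matrix (Fin (n + 1)) (Fin (n + 1)) R)⟩ : MatSig R)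
        (⟨n, n, (1 : Matrix (Fin n) (Fin n) R)⟩ : MatSig R) := by
  constructor
  · rintro ⟨f⟩ n - h
    have hle : f.rk (idSig (n + 1)) ≤ f.rk (idSig n) := f.rk_le_of_msub h
    rw [f.rk_idSig, f.rk_idSig] at hle
    push_cast at hle
    linarith
  · intro h
    obtain ⟨φ, hφ, hφ₁⟩ := (rankCone R).exists_nonneg_linearMap_of_isOrderUnit
      exists_smul_sub_mem_rankCone (neg_freeVec_idSig_one_not_mem h)
    exact ⟨.ofFunctional φ hφ hφ₁⟩

/-- Proposition: a (nonzero) unital ring `R` has a Sylvester matrix rank function if and only if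
`I_{n+1}` is not Malcolmson subequivalent to `I_n` for every `n ∈ ℕ` (`n ≥ 1`). -/
theorem stmt_3 {R : Type} [Ring R] [Nontrivial R] :
    Nonempty (SylvesterRank R) ↔
      ∀ n : ℕ, 0 < n → ¬ Msub (⟨n + 1, n + 1, (1 : Matrix (Fin (n + 1)) (Fin (n + 1)) R)⟩ : MatSig R)
        (⟨n, n, (1 : Matrix (Fin n) (Fin n) R)⟩ : MatSig R) :=
  stmt_3_general
end

section
/- Let R be a unital ring. If R has a Sylvester matrix rank function, then R satisfies the rank condition, i.e. for every n ∈ ℕ the free left R-module R^n is not generated by n-1 elements. -/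
/-- Proposition: if a unital ring `R` has a Sylvester matrix rank function, then `R` satisfies
the rank condition: for every `n ≥ 1`, the free left `R`-module `R^n` is not generated by
`n - 1` elements. -/
theorem stmt_4 {R : Type} [Ring R] [Nontrivial R] (h : Nonempty (SylvesterRank R)) :
    ∀ n : ℕ, 0 < n → ¬ ∃ f : Fin (n - 1) → (Fin n → R),
      Submodule.span R (Set.range f) = (⊤ : Submodule R (Fin n → R)) := by

  obtain ⟨rf⟩ := h
  -- rank of the identity matrix is n
  have hid : ∀ n : ℕ, rf.rk ⟨n, n, (1 : Matrix (Fin n) (Fin n) R)⟩ = n := by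
    intro n
    induction n with
    | zero =>
      have h0 : blockSig (1 : Matrix (Fin 0) (Fin 0) R) 0 (1 : Matrix (Fin 0) (Fin 0) R)
          = (⟨0, 0, (1 : Matrix (Fin 0) (Fin 0) R)⟩ : MatSig R) :=
        congrArg (fun M : Matrix (Fin 0) (Fin 0) R => (⟨0, 0, M⟩ : MatSig R))
          (Subsingleton.elim _ _)
      have hd := rf.rk_diag (1 : Matrix (Fin 0) (Fin 0) R) (1 : Matrix (Fin 0) (Fin 0) R)
      rw [h0] at hd
      simp only [Nat.cast_zero]
      linarith
    | succ n ih =>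
      have h1 : blockSig (1 : Matrix (Fin n) (Fin n) R) 0 (1 : Matrix (Fin 1) (Fin 1) R)
          = (⟨n + 1, n + 1, (1 : Matrix (Fin (n + 1)) (Fin (n + 1)) R)⟩ : MatSig R) :=
        congrArg (fun M : Matrix (Fin (n + 1)) (Fin (n + 1)) R =>
          (⟨n + 1, n + 1, M⟩ : MatSig R)) (by
            rw [Matrix.fromBlocks_one]
            simp [Matrix.reindex_apply, Matrix.submatrix_one_equiv])
      have hd := rf.rk_diag (1 : Matrix (Fin n) (Fin n) R) (1 : Matrix (Fin 1) (Fin 1) R)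
      rw [h1, ih, rf.rk_one] at hd
      rw [hd]
      push_cast
      ring
  rintro n hn ⟨g, hg⟩
  have hc : ∀ i : Fin n, ∃ c : Fin (n - 1) → R, ∑ j, c j • g j = Pi.single i 1 := by
    intro i
    rw [← Submodule.mem_span_range_iff_exists_fun, hg]
    trivial
  choose c hcspec using hc
  set F : Matrix (Fin (n - 1)) (Fin n) R := Matrix.of fun j k => g j k with hF
  set C : Matrix (Fin n) (Fin (n - 1)) R := Matrix.of fun i j => c i j with hC
  have hCF : C * F = 1 := by
    ext i k
    have := congrFun (hcspec i) k
    simp only [Finset.sum_apply, Pi.smul_apply, smul_eq_mul, Pi.single_apply] at this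
    simp only [Matrix.mul_apply, hC, hF, Matrix.of_apply, Matrix.one_apply, this]
    by_cases hik : i = k <;> simp [hik, eq_comm]
  have h1 : rf.rk ⟨n, n, (1 : Matrix (Fin n) (Fin n) R)⟩ ≤ rf.rk ⟨n - 1, n, F⟩ := by
    have := rf.rk_mul_le_right C F
    rwa [hCF] at this
  have h2 : rf.rk ⟨n - 1, n, F⟩ ≤ rf.rk ⟨n - 1, n - 1, (1 : Matrix (Fin (n-1)) (Fin (n-1)) R)⟩ := by
    have := rf.rk_mul_le_left (1 : Matrix (Fin (n - 1)) (Fin (n - 1)) R) F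
    simpa using this
  rw [hid] at h1 h2
  have hlt : ((n - 1 : ℕ) : ℝ) < (n : ℝ) := by
    exact_mod_cast Nat.sub_lt hn one_pos
  linarith
end

section
/- Let R be a commutative unital ring, let A, B be rectangular matrices over R with A ≼_M B (Malcolmson subequivalent), let J be an ideal of R and k ∈ ℕ. If every k×k-minor of B lies in J, then every k×k-minor of A lies in J. -/
/-!
By Cauchy–Binet, a `k × k` minor of `X * M * Y` is an `R`-linear combination of `k × k` minors
of `M`, so the minors of `C * B * D` lie in every ideal containing those of `B`. A minor of
`diag(C, D)` is either `0` or equal to the minor of `[[C, E], [0, D]]` on the same rows and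
columns: if the chosen rows of `C` and columns of `C` are equally many, the corresponding
submatrix of `[[C, E], [0, D]]` is block upper triangular with the same diagonal blocks.
-/

open Finset

theorem Finset.card_filter_comp_equiv {α β : Type*} [Fintype α] [Fintype β] (e : α ≃ β)
    (P : β → Prop) [DecidablePred P] : #{a | P (e a)} = #{b | P b} := by
  simp only [← Fintype.card_subtype]
  exact Fintype.card_congr (e.subtypeEquiv fun _ => Iff.rfl)

namespace Matrix

variable {R : Type*} [CommRing R]

def MinorsMem {m n : Type*} (J : Ideal R) (k : ℕ) (M : Matrix m n R) : Prop :=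
  ∀ (f : Fin k → m) (g : Fin k → n), Function.Injective f → Function.Injective g →
    (M.submatrix f g).det ∈ J

section CauchyBinet

variable {m n : Type*} [Fintype m] [Fintype n] [DecidableEq n]

theorem det_mul_eq_sum_det_submatrix_mul_prod (X : Matrix n m R) (W : Matrix m n R) :
    (X * W).det = ∑ p : n → m, (X.submatrix id p).det * ∏ i, W (p i) i := by
  simp only [det_apply', mul_apply, prod_univ_sum, Finset.mul_sum, Fintype.piFinset_univ,
    Finset.sum_mul, submatrix_apply, id, Finset.prod_mul_distrib]
  rw [Finset.sum_comm]
  refine Finset.sum_congr rfl fun p _ => Finset.sum_congr rfl fun σ _ => ?_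
  ring

theorem det_mul_mem_of_det_submatrix_mem {J : Ideal R} (X : Matrix n m R) (W : Matrix m n R)
    (hX : ∀ p : n → m, Function.Injective p → (X.submatrix id p).det ∈ J) :
    (X * W).det ∈ J := by
  rw [det_mul_eq_sum_det_submatrix_mul_prod]
  refine J.sum_mem fun p _ => J.mul_mem_right _ ?_
  by_cases hp : Function.Injective p
  · exact hX p hp
  · obtain ⟨i, j, hpij, hij⟩ := Function.not_injective_iff.mp hp
    rw [det_zero_of_column_eq hij fun l => by simp [hpij]]
    exact J.zero_mem

end CauchyBinet

/-- A permutation `σ` contributes to the left-hand determinant only if it maps `{Q}` onto `{P}`,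
which forces `#{P} = #{Q}`; in that case every other `σ` sends some `j ∈ {Q}` outside `{P}` and
so contributes `0` to both determinants. -/
theorem det_diagonalBlocks_of_blockTriangular {n : Type*} [Fintype n] [DecidableEq n]
    (N : Matrix n n R) (P Q : n → Prop) [DecidablePred P] [DecidablePred Q]
    (hN : ∀ i j, ¬P i → Q j → N i j = 0) :
    (of fun i j => if (P i ↔ Q j) then N i j else 0).det =
      if #{i | P i} = #{j | Q j} then N.det else 0 := by
  rw [det_apply, det_apply]
  split_ifs with hcard
  · refine Finset.sum_congr rfl fun σ _ => congrArg _ ?_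
    by_cases hσ : ∀ j, Q j → P (σ j)
    · have hsub : univ.filter Q ⊆ univ.filter fun j => P (σ j) := fun j => by simpa using hσ j
      have hσQ := eq_of_subset_of_card_le hsub (by rw [card_filter_comp_equiv σ P, hcard])
      have hiff : ∀ j, P (σ j) ↔ Q j := fun j => by simpa using (Finset.ext_iff.mp hσQ j).symm
      exact Finset.prod_congr rfl fun j _ => by simp [hiff j]
    · push Not at hσ
      obtain ⟨j, hQ, hP⟩ := hσ
      rw [prod_eq_zero (f := fun i => N (σ i) i) (mem_univ j) (hN _ _ hP hQ)]
      exact prod_eq_zero (mem_univ j) (by simp [hQ, hP])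
  · refine Finset.sum_eq_zero fun σ _ => ?_
    suffices ∃ j, ¬(P (σ j) ↔ Q j) by
      obtain ⟨j, hj⟩ := this
      rw [prod_eq_zero (mem_univ j) (by simp [hj]), smul_zero]
    by_contra! hiff
    exact hcard (by rw [← card_filter_comp_equiv σ P]; simp only [hiff])

namespace MinorsMem

variable {l m n o : Type*} {J : Ideal R} {k : ℕ}

theorem transpose {M : Matrix m n R} (h : M.MinorsMem J k) : Mᵀ.MinorsMem J k :=
  fun f g hf hg => by
    rw [← transpose_submatrix, det_transpose]
    exact h g f hg hf

theorem submatrix {M : Matrix m n R} (h : M.MinorsMem J k) {e₁ : l → m} {e₂ : o → n}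
    (he₁ : Function.Injective e₁) (he₂ : Function.Injective e₂) :
    (M.submatrix e₁ e₂).MinorsMem J k :=
  fun f g hf hg => h (e₁ ∘ f) (e₂ ∘ g) (he₁.comp hf) (he₂.comp hg)

theorem reindex_iff {M : Matrix m n R} (e₁ : m ≃ l) (e₂ : n ≃ o) :
    (reindex e₁ e₂ M).MinorsMem J k ↔ M.MinorsMem J k := by
  refine ⟨fun h => ?_, fun h => h.submatrix e₁.symm.injective e₂.symm.injective⟩
  simpa using h.submatrix e₁.injective e₂.injective

theorem mul_right [Fintype n] {M : Matrix m n R} (h : M.MinorsMem J k) (Y : Matrix n o R) :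
    (M * Y).MinorsMem J k := by
  intro f g hf _
  rw [submatrix_mul M Y f id g Function.bijective_id]
  exact det_mul_mem_of_det_submatrix_mem _ _ fun p hp => h f p hf hp

theorem mul_left [Fintype m] {M : Matrix m n R} (h : M.MinorsMem J k) (X : Matrix l m R) :
    (X * M).MinorsMem J k := by
  simpa using (h.transpose.mul_right Xᵀ).transpose

theorem fromBlocks_zero {p q r s : Type*} {C : Matrix p r R} {E : Matrix p s R}
    {D : Matrix q s R} (h : (fromBlocks C E 0 D).MinorsMem J k) :
    (fromBlocks C 0 0 D).MinorsMem J k := by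
  intro f g hf hg
  have hdiag : (fromBlocks C 0 0 D).submatrix f g = of fun i j =>
      if ((f i).isLeft ↔ (g j).isLeft) then (fromBlocks C E 0 D).submatrix f g i j else 0 := by
    ext i j
    simp only [submatrix_apply, of_apply]
    cases f i <;> cases g j <;> simp
  rw [hdiag, det_diagonalBlocks_of_blockTriangular]
  · split_ifs
    exacts [h f g hf hg, J.zero_mem]
  · intro i j
    simp only [submatrix_apply]
    cases f i <;> cases g j <;> simp

end MinorsMem

end Matrix

open Matrix

theorem MStep.minorsMem {R : Type} [CommRing R] {A B : MatSig R} (hAB : MStep A B)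
    {J : Ideal R} {k : ℕ} (hB : B.2.2.MinorsMem J k) : A.2.2.MinorsMem J k := by
  rcases hAB with ⟨C, D, hA⟩ | ⟨p, q, r, s, C, E, D, rfl, rfl⟩
  · rw [hA]
    exact (hB.mul_left C).mul_right D
  · rw [blockSig, MinorsMem.reindex_iff] at hB ⊢
    exact hB.fromBlocks_zero

theorem Msub.minorsMem {R : Type} [CommRing R] {A B : MatSig R} (hAB : Msub A B)
    {J : Ideal R} {k : ℕ} (hB : B.2.2.MinorsMem J k) : A.2.2.MinorsMem J k := by
  induction hAB using Relation.ReflTransGen.head_induction_on with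
  | refl => exact hB
  | head hstep _ ih => exact hstep.minorsMem ih

/-- Lemma (minors): let `R` be a commutative unital ring, `A ≼_M B` rectangular matrices over
`R`, `J` an ideal of `R` and `k ∈ ℕ`. If every `k × k`-minor of `B` lies in `J`, then every
`k × k`-minor of `A` lies in `J`. -/
theorem stmt_5 {R : Type} [CommRing R] (A B : MatSig R) (hAB : Msub A B)
    (J : Ideal R) (k : ℕ)
    (hB : ∀ (f : Fin k → Fin B.1) (g : Fin k → Fin B.2.1), Function.Injective f →
      Function.Injective g → (B.2.2.submatrix f g).det ∈ J) :
    ∀ (f : Fin k → Fin A.1) (g : Fin k → Fin A.2.1), Function.Injective f →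
      Function.Injective g → (A.2.2.submatrix f g).det ∈ J :=
  hAB.minorsMem hB
end

section
/- Let R be a commutative unital ring and a ∈ R with a^{2|n-m|+1} ∉ R·a^{2|n-m|+2}, where m, n, j, k, l ≥ 0 are integers. If the diagonal matrix with m entries 1, k entries a, and j entries a² is Malcolmson subequivalent to the diagonal matrix with n entries 1 and l entries a², then k ≤ 2(n - m). -/
/-- The diagonal matrix with `m` diagonal entries `1`, `k` diagonal entries `a` and `j`
diagonal entries `a ^ 2`, as an element of `MatSig R`. -/
def diag3 {R : Type} [CommRing R] (m k j : ℕ) (a : R) : MatSig R :=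
  blockSig (1 : Matrix (Fin m) (Fin m) R)
    0 (blockSig (Matrix.diagonal fun _ : Fin k => a) 0
        (Matrix.diagonal fun _ : Fin j => a ^ 2)).2.2

/-!
The ideal `I_t(M)` spanned by the `t × t` minors of a matrix can only grow along Malcolmson
subequivalence. Under `A = C B D` this is the expansion of a minor of a product by
multilinearity. For `[[C, 0], [0, D]] ≲ [[C, E], [0, D]]` one passes to `R[X]`: the matrix
`[[X C, E], [0, X D]] = diag(1, X) [[C, E], [0, D]] diag(X, 1)` has its minors in `I_t` of the
upper triangular matrix, and the `X ^ t`-coefficient of each of them is the corresponding minor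
of the block diagonal one.

For `c ≤ k` the principal minors give `a ^ c ∈ I_{m+c}(diag(1_m, a 1_k, a² 1_j))`, while every
`t`-minor of `diag(1_n, a² 1_l)` is divisible by `a ^ (2(t - n))`. If `k > 2(n - m) ≥ 0`, the
choice `c = 2(n - m) + 1` puts `a ^ (2(n-m)+1)` into `(a ^ (2(n-m)+2))`; if `m > n`, `c = 0`
makes `a` a unit. Either contradicts the hypothesis on `a`.
-/

open Matrix Polynomial Finset

namespace Matrix

variable {R S : Type*} [CommRing R] [CommRing S] {α β γ δ : Type*}

/-- Row and column selections need not be injective: the extra determinants vanish. -/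
def minorIdeal (t : ℕ) (M : Matrix α β R) : Ideal R :=
  Ideal.span {x | ∃ (r : Fin t → α) (c : Fin t → β), (M.submatrix r c).det = x}

theorem det_submatrix_mem_minorIdeal {t : ℕ} (M : Matrix α β R) (r : Fin t → α)
    (c : Fin t → β) : (M.submatrix r c).det ∈ M.minorIdeal t :=
  Ideal.subset_span ⟨r, c, rfl⟩

theorem minorIdeal_le_iff {t : ℕ} {M : Matrix α β R} {J : Ideal R} :
    M.minorIdeal t ≤ J ↔ ∀ (r : Fin t → α) (c : Fin t → β), (M.submatrix r c).det ∈ J := by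
  simp only [minorIdeal, Ideal.span_le, Set.subset_def, Set.mem_ofPred_eq]
  exact ⟨fun h r c => h _ ⟨r, c, rfl⟩, fun h _ ⟨r, c, hx⟩ => hx ▸ h r c⟩

theorem one_mem_minorIdeal_zero (M : Matrix α β R) : 1 ∈ M.minorIdeal 0 := by
  simpa using det_submatrix_mem_minorIdeal M Fin.elim0 Fin.elim0

theorem prod_mem_minorIdeal_diagonal [DecidableEq α] {t : ℕ} (d : α → R) {r : Fin t → α}
    (hr : r.Injective) : ∏ i, d (r i) ∈ (diagonal d).minorIdeal t := by
  simpa [submatrix_diagonal d r hr] using det_submatrix_mem_minorIdeal (diagonal d) r r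

theorem minorIdeal_submatrix_le (t : ℕ) (M : Matrix α β R) (f : γ → α) (g : δ → β) :
    (M.submatrix f g).minorIdeal t ≤ M.minorIdeal t :=
  minorIdeal_le_iff.mpr fun r c => by
    simpa only [submatrix_submatrix] using det_submatrix_mem_minorIdeal M (f ∘ r) (g ∘ c)

theorem minorIdeal_reindex (t : ℕ) (M : Matrix α β R) (e : α ≃ γ) (f : β ≃ δ) :
    (reindex e f M).minorIdeal t = M.minorIdeal t := by
  refine le_antisymm (minorIdeal_submatrix_le t M _ _) ?_
  simpa using minorIdeal_submatrix_le t (reindex e f M) e f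

theorem minorIdeal_transpose_le (t : ℕ) (M : Matrix α β R) :
    Mᵀ.minorIdeal t ≤ M.minorIdeal t :=
  minorIdeal_le_iff.mpr fun r c => by
    rw [show Mᵀ.submatrix r c = (M.submatrix c r)ᵀ from rfl, det_transpose]
    exact det_submatrix_mem_minorIdeal M c r

theorem minorIdeal_transpose (t : ℕ) (M : Matrix α β R) :
    Mᵀ.minorIdeal t = M.minorIdeal t :=
  le_antisymm (minorIdeal_transpose_le t M) (by
    simpa only [transpose_transpose] using minorIdeal_transpose_le t Mᵀ)

theorem det_mul_eq_sum_det_submatrix [Fintype α] [DecidableEq α] {t : ℕ}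
    (X : Matrix (Fin t) α R) (N : Matrix α (Fin t) R) :
    (X * N).det = ∑ f : Fin t → α, (∏ i, X i (f i)) * (N.submatrix f id).det := by
  have hrows : (X * N).det = (detRowAlternating : (Fin t → R) [⋀^Fin t]→ₗ[R] R).toMultilinearMap
      (fun i => ∑ k, X i k • N k) := by
    congr 1
    ext i j
    simp [mul_apply]
  rw [hrows, MultilinearMap.map_sum]
  exact Finset.sum_congr rfl fun f _ => by rw [MultilinearMap.map_smul_univ, smul_eq_mul]; rfl

theorem minorIdeal_mul_left_le [Fintype β] [DecidableEq β] (t : ℕ) (X : Matrix α β R)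
    (M : Matrix β γ R) : (X * M).minorIdeal t ≤ M.minorIdeal t :=
  minorIdeal_le_iff.mpr fun r c => by
    rw [show (X * M).submatrix r c = X.submatrix r id * M.submatrix id c by ext; simp [mul_apply],
      det_mul_eq_sum_det_submatrix]
    exact Ideal.sum_mem _ fun f _ => Ideal.mul_mem_left _ _ (by
      simpa only [submatrix_submatrix, Function.id_comp, Function.comp_id] using
        det_submatrix_mem_minorIdeal M f c)

theorem minorIdeal_mul_right_le [Fintype β] [DecidableEq β] (t : ℕ) (M : Matrix α β R)
    (Y : Matrix β γ R) : (M * Y).minorIdeal t ≤ M.minorIdeal t := by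
  rw [← minorIdeal_transpose, transpose_mul, ← minorIdeal_transpose t M]
  exact minorIdeal_mul_left_le t _ _

theorem minorIdeal_map_le (t : ℕ) (M : Matrix α β R) (φ : R →+* S) :
    (M.map φ).minorIdeal t ≤ (M.minorIdeal t).map φ :=
  minorIdeal_le_iff.mpr fun r c => by
    have := Ideal.mem_map_of_mem φ (det_submatrix_mem_minorIdeal M r c)
    rwa [RingHom.map_det] at this

theorem mul_le_minorIdeal_fromBlocks {s t : ℕ} (A : Matrix α γ R) (B : Matrix β δ R) :
    A.minorIdeal s * B.minorIdeal t ≤ (fromBlocks A 0 0 B).minorIdeal (s + t) := by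
  rw [minorIdeal, minorIdeal, Ideal.span_mul_span', Ideal.span_le]
  rintro _ ⟨_, ⟨r, c, rfl⟩, _, ⟨r', c', rfl⟩, rfl⟩
  have hblock : (fromBlocks A 0 0 B).submatrix (Sum.map r r') (Sum.map c c') =
      fromBlocks (A.submatrix r c) 0 0 (B.submatrix r' c') := by
    ext (i | i) (j | j) <;> rfl
  show (A.submatrix r c).det * (B.submatrix r' c').det ∈ _
  rw [← det_fromBlocks_zero₁₂, ← hblock, ← det_submatrix_equiv_self finSumFinEquiv.symm,
    submatrix_submatrix]
  exact det_submatrix_mem_minorIdeal _ _ _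

theorem minorIdeal_fromBlocks_zero_le [Fintype α] [Fintype β] [Fintype γ] [Fintype δ]
    [DecidableEq α] [DecidableEq β] [DecidableEq γ] [DecidableEq δ] (t : ℕ)
    (C : Matrix α γ R) (E : Matrix α δ R) (D : Matrix β δ R) :
    (fromBlocks C 0 0 D).minorIdeal t ≤ (fromBlocks C E 0 D).minorIdeal t := by
  set M := fromBlocks C E 0 D
  let N : Matrix (α ⊕ β) (γ ⊕ δ) R[X] :=
    (X : R[X]) • (fromBlocks C 0 0 D).map Polynomial.C + (fromBlocks 0 E 0 0).map Polynomial.C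
  have hN : N = (diagonal (Sum.elim 1 fun _ => X) : Matrix (α ⊕ β) (α ⊕ β) R[X]) *
      M.map Polynomial.C * (diagonal (Sum.elim (fun _ => X) 1) : Matrix (γ ⊕ δ) (γ ⊕ δ) R[X]) := by
    ext (i | i) (j | j) : 1 <;> simp [N, M, diagonal_mul, mul_diagonal, mul_comm X]
  have hN_le : N.minorIdeal t ≤ (M.minorIdeal t).map Polynomial.C := by
    rw [hN]
    exact (minorIdeal_mul_right_le t _ _).trans <|
      (minorIdeal_mul_left_le t _ _).trans (minorIdeal_map_le t M Polynomial.C)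
  refine minorIdeal_le_iff.mpr fun r c => ?_
  have htop := coeff_det_X_add_C_card ((fromBlocks C 0 0 D).submatrix r c)
    ((fromBlocks 0 E 0 0).submatrix r c)
  rw [Fintype.card_fin] at htop
  rw [← htop]
  exact Ideal.mem_map_C_iff.mp (hN_le (det_submatrix_mem_minorIdeal N r c)) t

theorem minorIdeal_diagonal_le [DecidableEq α] {t : ℕ} (d : α → R) {J : Ideal R}
    (hJ : ∀ r : Fin t → α, r.Injective → ∏ i, d (r i) ∈ J) : (diagonal d).minorIdeal t ≤ J := by
  refine minorIdeal_le_iff.mpr fun r c => ?_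
  by_cases hr : r.Injective
  · rw [show (diagonal d).submatrix r c = diagonal (d ∘ r) * (1 : Matrix α α R).submatrix r c by
      ext i j; simp [diagonal_apply, one_apply], det_mul, det_diagonal]
    exact J.mul_mem_right _ (hJ r hr)
  · obtain ⟨i, i', heq, hne⟩ := Function.not_injective_iff.mp hr
    rw [det_zero_of_row_eq hne (by ext j; simp [heq])]
    exact J.zero_mem

end Matrix

theorem minorIdeal_blockSig {R : Type} [CommRing R] {p q r s : ℕ} (t : ℕ)
    (C : Matrix (Fin p) (Fin r) R) (E : Matrix (Fin p) (Fin s) R) (D : Matrix (Fin q) (Fin s) R) :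
    (blockSig C E D).2.2.minorIdeal t = (fromBlocks C E 0 D).minorIdeal t :=
  minorIdeal_reindex t _ _ _

theorem MStep.minorIdeal_le {R : Type} [CommRing R] {A B : MatSig R} (h : MStep A B) (t : ℕ) :
    A.2.2.minorIdeal t ≤ B.2.2.minorIdeal t := by
  rcases h with ⟨C, D, hA⟩ | ⟨p, q, r, s, C, E, D, rfl, rfl⟩
  · rw [hA]
    exact (minorIdeal_mul_right_le t _ _).trans (minorIdeal_mul_left_le t _ _)
  · rw [minorIdeal_blockSig, minorIdeal_blockSig]
    exact minorIdeal_fromBlocks_zero_le t C E D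

theorem Msub.minorIdeal_le {R : Type} [CommRing R] {A B : MatSig R} (h : Msub A B) (t : ℕ) :
    A.2.2.minorIdeal t ≤ B.2.2.minorIdeal t := by
  induction h with
  | refl => exact le_rfl
  | tail _ hstep ih => exact ih.trans (hstep.minorIdeal_le t)

theorem pow_mem_minorIdeal_diag3 {R : Type} [CommRing R] (a : R) {m k c : ℕ} (j : ℕ)
    (hc : c ≤ k) : a ^ c ∈ (diag3 m k j a).2.2.minorIdeal (m + c) := by
  have hdiag : a ^ c ∈ (diagonal fun _ : Fin k => a).minorIdeal c := by
    simpa using prod_mem_minorIdeal_diagonal (fun _ : Fin k => a) (Fin.castLE_injective hc)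
  have hone : (1 : R) ∈ (1 : Matrix (Fin m) (Fin m) R).minorIdeal m := by
    simpa using prod_mem_minorIdeal_diagonal (1 : Fin m → R) Function.injective_id
  have hW : a ^ c ∈ (blockSig (diagonal fun _ : Fin k => a) 0
      (diagonal fun _ : Fin j => a ^ 2)).2.2.minorIdeal c := by
    have := mul_le_minorIdeal_fromBlocks (s := c) (t := 0) _ _
      (Ideal.mul_mem_mul hdiag (one_mem_minorIdeal_zero (diagonal fun _ : Fin j => a ^ 2)))
    rwa [mul_one, add_zero, ← minorIdeal_blockSig] at this
  rw [diag3, minorIdeal_blockSig, ← one_mul (a ^ c)]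
  exact mul_le_minorIdeal_fromBlocks _ _ (Ideal.mul_mem_mul hone hW)

theorem minorIdeal_blockSig_one_diagonal_le {R : Type} [CommRing R] (b : R) (n l t : ℕ) :
    (blockSig (1 : Matrix (Fin n) (Fin n) R) 0 (diagonal fun _ : Fin l => b)).2.2.minorIdeal t
      ≤ Ideal.span {b ^ (t - n)} := by
  rw [minorIdeal_blockSig, ← diagonal_one, fromBlocks_diagonal]
  refine minorIdeal_diagonal_le _ fun r hr => Ideal.mem_span_singleton.mpr ?_
  set S : Finset (Fin n ⊕ Fin l) := univ.map ⟨r, hr⟩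
  have hcard : #S.toLeft + #S.toRight = t := by
    rw [card_toLeft_add_card_toRight, card_map, card_univ, Fintype.card_fin]
  have hleft : #S.toLeft ≤ n := (card_le_univ _).trans_eq (Fintype.card_fin n)
  have hprod : ∏ i, Sum.elim (fun _ => 1) (fun _ => b) (r i) = b ^ #S.toRight := calc
    _ = ∏ x ∈ S, Sum.elim (fun _ => (1 : R)) (fun _ => b) x := (prod_map univ ⟨r, hr⟩ _).symm
    _ = b ^ #S.toRight := by simp [prod_sum_eq_prod_toLeft_mul_prod_toRight]
  rw [hprod]
  exact pow_dvd_pow b (by omega)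

/-- Lemma (upper bound): let `R` be a commutative unital ring, `a ∈ R` and `m, n, j, k, l ≥ 0`
with `a ^ (2|n-m|+1) ∉ R a ^ (2|n-m|+2)`.  If the diagonal matrix with `m` entries `1`,
`k` entries `a` and `j` entries `a²` is Malcolmson subequivalent to the diagonal matrix with
`n` entries `1` and `l` entries `a²`, then `k ≤ 2(n - m)`. -/
theorem stmt_6 {R : Type} [CommRing R] (a : R) (m n j k l : ℕ)
    (ha : a ^ (2 * ((n : ℤ) - m).natAbs + 1) ∉ Ideal.span {a ^ (2 * ((n : ℤ) - m).natAbs + 2)})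
    (h : Msub (diag3 m k j a)
      (blockSig (1 : Matrix (Fin n) (Fin n) R) 0 (Matrix.diagonal fun _ : Fin l => a ^ 2))) :
    (k : ℤ) ≤ 2 * ((n : ℤ) - m) := by
  by_contra! hk
  have hminor (c : ℕ) (hc : c ≤ k) : a ^ c ∈ Ideal.span {(a ^ 2) ^ (m + c - n)} :=
    minorIdeal_blockSig_one_diagonal_le (a ^ 2) n l (m + c)
      (h.minorIdeal_le _ (pow_mem_minorIdeal_diag3 a j hc))
  rcases le_or_gt m n with hmn | hmn
  · have hd : ((n : ℤ) - m).natAbs = n - m := by omega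
    have := hminor (2 * (n - m) + 1) (by omega)
    rw [← pow_mul, show 2 * (m + (2 * (n - m) + 1) - n) = 2 * (n - m) + 2 by omega] at this
    exact ha (hd ▸ this)
  · have hone : (a ^ 2) ^ (m + 0 - n) ∣ 1 := by
      simpa only [pow_zero, Ideal.mem_span_singleton] using hminor 0 k.zero_le
    have hunit : IsUnit a :=
      isUnit_of_dvd_one ((dvd_pow (dvd_pow_self a two_ne_zero) (by omega)).trans hone)
    exact ha (by simp [Ideal.span_singleton_eq_top.mpr (hunit.pow _)])
end

section
/- Let R be a commutative unital ring and a ∈ R neither invertible nor nilpotent. Then the set of values rk(a), as rk ranges over regular Sylvester matrix rank functions of R, is exactly the interval [0, 1]. -/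
open Matrix
set_option maxHeartbeats 1000000
set_option synthInstance.maxHeartbeats 200000
set_option linter.unusedSectionVars false
set_option linter.unusedVariables false

namespace Stmt8Aux

variable {K : Type} [Field K]
variable {m n o p : Type} [Fintype m] [Fintype n] [Fintype o] [Fintype p]

/-- Extend a function on `m` by zero to `m ⊕ o`. -/
def extL (K m o : Type) [Field K] : (m → K) →ₗ[K] (m ⊕ o → K) where
  toFun y := Sum.elim y 0
  map_add' x y := by funext i; cases i <;> simp
  map_smul' c x := by funext i; cases i <;> simp

def extR (K m o : Type) [Field K] : (o → K) →ₗ[K] (m ⊕ o → K) where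
  toFun y := Sum.elim 0 y
  map_add' x y := by funext i; cases i <;> simp
  map_smul' c x := by funext i; cases i <;> simp

lemma extL_inj : Function.Injective (extL K m o) := fun x y h =>
  funext fun i => congrFun h (Sum.inl i)

lemma extR_inj : Function.Injective (extR K m o) := fun x y h =>
  funext fun i => congrFun h (Sum.inr i)

theorem rank_le_fromBlocks (A : Matrix m n K) (E : Matrix m p K) (B : Matrix o p K) :
    A.rank + B.rank ≤ (fromBlocks A E 0 B).rank := by
  classical
  set M := fromBlocks A E 0 B with hM
  set W := LinearMap.range M.mulVecLin with hW
  set π : (m ⊕ o → K) →ₗ[K] (o → K) := LinearMap.funLeft K K Sum.inr with hπ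
  have rn := LinearMap.finrank_range_add_finrank_ker (π.domRestrict W)
  have hcomp : π ∘ₗ M.mulVecLin = B.mulVecLin ∘ₗ LinearMap.funLeft K K (Sum.inr : p → n ⊕ p) := by
    apply LinearMap.ext; intro x
    simp [hπ, hM, mulVecLin_apply, fromBlocks_mulVec, LinearMap.funLeft_apply,
      Matrix.zero_mulVec]
    rfl
  have hrange : LinearMap.range (π.domRestrict W) = LinearMap.range B.mulVecLin := by
    rw [LinearMap.range_domRestrict, hW, ← LinearMap.range_comp, hcomp, LinearMap.range_comp,
      LinearMap.range_eq_top.mpr (LinearMap.funLeft_surjective_of_injective K K _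
        Sum.inr_injective), Submodule.map_top]
  set V := (LinearMap.range A.mulVecLin).map (extL K m o) with hV
  have hVfr : Module.finrank K V = A.rank :=
    (Submodule.equivMapOfInjective _ extL_inj _).finrank_eq.symm
  have hVW : V ≤ W := by
    rintro v hv
    rw [hV] at hv
    obtain ⟨y, ⟨x, rfl⟩, rfl⟩ := hv
    refine ⟨Sum.elim x 0, ?_⟩
    funext i
    cases i <;>
      simp [hM, mulVecLin_apply, fromBlocks_mulVec, extL, Matrix.mulVec_zero,
        Sum.elim_comp_inl, Sum.elim_comp_inr]
  have hsub : Submodule.comap W.subtype V ≤ LinearMap.ker (π.domRestrict W) := by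
    rintro ⟨w, hw⟩ hv
    simp only [Submodule.mem_comap, Submodule.coe_subtype] at hv
    rw [hV] at hv
    obtain ⟨y, -, hy⟩ := hv
    simp only [LinearMap.mem_ker, LinearMap.domRestrict_apply]
    funext i
    rw [hπ]
    simp [LinearMap.funLeft_apply, ← hy, extL]
  have h2 : A.rank ≤ Module.finrank K (LinearMap.ker (π.domRestrict W)) := by
    calc A.rank = Module.finrank K V := hVfr.symm
      _ = Module.finrank K (Submodule.comap W.subtype V) :=
        (Submodule.comapSubtypeEquivOfLe hVW).finrank_eq.symm
      _ ≤ _ := Submodule.finrank_mono hsub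
  have h3 : B.rank = Module.finrank K (LinearMap.range (π.domRestrict W)) := by
    rw [hrange]; rfl
  have h4 : M.rank = Module.finrank K ↥W := rfl
  omega

theorem rank_fromBlocks_diag_le (A : Matrix m n K) (B : Matrix o p K) :
    (fromBlocks A (0 : Matrix m p K) 0 B).rank ≤ A.rank + B.rank := by
  classical
  set VA := (LinearMap.range A.mulVecLin).map (extL K m o) with hVA
  set VB := (LinearMap.range B.mulVecLin).map (extR K m o) with hVB
  have hsub : LinearMap.range (fromBlocks A (0 : Matrix m p K) 0 B).mulVecLin ≤ VA ⊔ VB := by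
    rintro v ⟨x, rfl⟩
    have hx : (fromBlocks A (0 : Matrix m p K) 0 B).mulVecLin x
        = extL K m o (A.mulVecLin (x ∘ Sum.inl)) + extR K m o (B.mulVecLin (x ∘ Sum.inr)) := by
      funext i
      cases i <;>
        simp [extL, extR, fromBlocks_mulVec, mulVecLin_apply, Matrix.zero_mulVec]
    rw [hx]
    exact Submodule.add_mem_sup (Submodule.mem_map_of_mem ⟨_, rfl⟩)
      (Submodule.mem_map_of_mem ⟨_, rfl⟩)
  have hA : Module.finrank K VA = A.rank :=
    (Submodule.equivMapOfInjective _ extL_inj _).finrank_eq.symm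
  have hB : Module.finrank K VB = B.rank :=
    (Submodule.equivMapOfInjective _ extR_inj _).finrank_eq.symm
  have hsup := Submodule.finrank_sup_add_finrank_inf_eq VA VB
  have h1 : (fromBlocks A (0 : Matrix m p K) 0 B).rank ≤ Module.finrank K ↥(VA ⊔ VB) :=
    Submodule.finrank_mono hsub
  omega

theorem rank_fromBlocks_diag (A : Matrix m n K) (B : Matrix o p K) :
    (fromBlocks A (0 : Matrix m p K) 0 B).rank = A.rank + B.rank :=
  le_antisymm (rank_fromBlocks_diag_le A B) (rank_le_fromBlocks A 0 B)

theorem rank_reindex' {m' n' : Type} [Fintype n'] (e₁ : m ≃ m') (e₂ : n ≃ n')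
    (A : Matrix m n K) : (Matrix.reindex e₁ e₂ A).rank = A.rank := by
  rw [Matrix.rank, Matrix.rank, Matrix.mulVecLin_reindex, LinearMap.range_comp,
    LinearMap.range_comp, LinearEquiv.range, Submodule.map_top, LinearEquiv.finrank_map_eq]

theorem rank_single {u : K} (hu : u ≠ 0) :
    (Matrix.of fun (_ : Fin 1) (_ : Fin 1) => u).rank = 1 := by
  have h : IsUnit (Matrix.of fun (_ : Fin 1) (_ : Fin 1) => u) := by
    rw [Matrix.isUnit_iff_isUnit_det, Matrix.det_fin_one]
    exact (isUnit_iff_ne_zero).mpr hu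
  simpa using Matrix.rank_of_isUnit _ h

end Stmt8Aux



/-- A witness that a Sylvester matrix rank function is regular: a unital ring homomorphism
`φ : R →+* S` to a von Neumann regular ring `S` carrying a Sylvester matrix rank function `g`
through which `f` factors. -/
structure RegularWitness {R : Type} [Ring R] (f : SylvesterRank R) where
  S : Type
  [instS : Ring S]
  vnr : ∀ a : S, ∃ b : S, a * b * a = a
  φ : R →+* S
  g : SylvesterRank S
  compat : ∀ (p q : ℕ) (A : Matrix (Fin p) (Fin q) R), f.rk ⟨p, q, A⟩ = g.rk ⟨p, q, A.map φ⟩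

/-- A Sylvester matrix rank function is regular if it factors through a unital ring
homomorphism to a von Neumann regular ring. -/
def SylvesterRank.IsRegular {R : Type} [Ring R] (f : SylvesterRank R) : Prop :=
  Nonempty (RegularWitness f)



namespace Stmt8Aux

open Matrix

/-- Mapping a `blockSig` entrywise along a ring hom. -/
lemma blockSig_snd_map {R S : Type} [Ring R] [Ring S] (φ : R →+* S) {p q r s : ℕ}
    (C : Matrix (Fin p) (Fin r) R) (E : Matrix (Fin p) (Fin s) R)
    (D : Matrix (Fin q) (Fin s) R) :
    ((blockSig C E D).2.2).map φ = (blockSig (C.map φ) (E.map φ) (D.map φ)).2.2 := by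
  show ((Matrix.reindex finSumFinEquiv finSumFinEquiv (Matrix.fromBlocks C E 0 D)).map φ) = _
  ext i j
  simp only [Matrix.reindex_apply, Matrix.submatrix_apply, Matrix.map_apply, blockSig]
  rcases h1 : finSumFinEquiv.symm i with x | x <;> rcases h2 : finSumFinEquiv.symm j with y | y <;>
    simp [Matrix.fromBlocks, map_zero]

lemma map_blockSig {R S : Type} [Ring R] [Ring S] (φ : R →+* S) {p q r s : ℕ}
    (C : Matrix (Fin p) (Fin r) R) (E : Matrix (Fin p) (Fin s) R)
    (D : Matrix (Fin q) (Fin s) R) :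
    (⟨p + q, r + s, ((blockSig C E D).2.2).map φ⟩ : MatSig S)
      = blockSig (C.map φ) (E.map φ) (D.map φ) := by
  rw [blockSig_snd_map φ C E D]
  rfl

/-- The Sylvester rank function of a field, given by classical matrix rank. -/
noncomputable def fieldRank (K : Type) [Field K] : SylvesterRank K where
  rk A := (A.2.2.rank : ℝ)
  rk_nonneg A := Nat.cast_nonneg _
  rk_zero := by simp [Matrix.rank_zero]
  rk_one := by simp
  rk_mul_le_left A B := by
    show (((A * B).rank : ℕ) : ℝ) ≤ ((A.rank : ℕ) : ℝ)
    exact_mod_cast Matrix.rank_mul_le_left A B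
  rk_mul_le_right A B := by
    show (((A * B).rank : ℕ) : ℝ) ≤ ((B.rank : ℕ) : ℝ)
    exact_mod_cast Matrix.rank_mul_le_right A B
  rk_diag A B := by
    show (((Matrix.reindex finSumFinEquiv finSumFinEquiv (Matrix.fromBlocks A 0 0 B)).rank : ℕ) : ℝ) = _
    rw [rank_reindex', rank_fromBlocks_diag]
    push_cast
    rfl
  rk_block_ge A E B := by
    show _ ≤ (((Matrix.reindex finSumFinEquiv finSumFinEquiv (Matrix.fromBlocks A E 0 B)).rank : ℕ) : ℝ)
    rw [rank_reindex']
    show ((A.rank : ℕ) : ℝ) + ((B.rank : ℕ) : ℝ) ≤ _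
    exact_mod_cast rank_le_fromBlocks A E B

/-- Pull back a Sylvester rank function along a ring homomorphism. -/
noncomputable def pullback {R S : Type} [Ring R] [Ring S] (φ : R →+* S)
    (g : SylvesterRank S) : SylvesterRank R where
  rk A := g.rk ⟨A.1, A.2.1, A.2.2.map φ⟩
  rk_nonneg A := g.rk_nonneg _
  rk_zero := by
    show g.rk ⟨1, 1, (0 : Matrix (Fin 1) (Fin 1) R).map φ⟩ = 0
    have : (0 : Matrix (Fin 1) (Fin 1) R).map φ = 0 := Matrix.map_zero _ (map_zero φ)
    rw [show (⟨1, 1, (0 : Matrix (Fin 1) (Fin 1) R).map φ⟩ : MatSig S) = ⟨1, 1, 0⟩ by rw [this]]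
    exact g.rk_zero
  rk_one := by
    show g.rk ⟨1, 1, (1 : Matrix (Fin 1) (Fin 1) R).map φ⟩ = 1
    have : (1 : Matrix (Fin 1) (Fin 1) R).map φ = 1 := Matrix.map_one _ (map_zero φ) (map_one φ)
    rw [show (⟨1, 1, (1 : Matrix (Fin 1) (Fin 1) R).map φ⟩ : MatSig S) = ⟨1, 1, 1⟩ by rw [this]]
    exact g.rk_one
  rk_mul_le_left := by
    intro n m k A B
    show g.rk ⟨n, k, (A * B).map φ⟩ ≤ g.rk ⟨n, m, A.map φ⟩
    rw [Matrix.map_mul]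
    exact g.rk_mul_le_left _ _
  rk_mul_le_right := by
    intro n m k A B
    show g.rk ⟨n, k, (A * B).map φ⟩ ≤ g.rk ⟨m, k, B.map φ⟩
    rw [Matrix.map_mul]
    exact g.rk_mul_le_right _ _
  rk_diag := by
    intro p q r s A B
    show g.rk ⟨p + q, r + s, ((blockSig A 0 B).2.2).map φ⟩ = _
    rw [map_blockSig, Matrix.map_zero _ (map_zero φ), g.rk_diag]
  rk_block_ge := by
    intro p q r s A E B
    show _ ≤ g.rk ⟨p + q, r + s, ((blockSig A E B).2.2).map φ⟩
    rw [map_blockSig]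
    exact g.rk_block_ge _ _ _

/-- Convex combination of two Sylvester rank functions. -/
noncomputable def combo {R : Type} [Ring R] (f0 f1 : SylvesterRank R) (t : ℝ)
    (h0 : 0 ≤ t) (h1 : t ≤ 1) : SylvesterRank R where
  rk A := (1 - t) * f0.rk A + t * f1.rk A
  rk_nonneg A := add_nonneg (mul_nonneg (by linarith) (f0.rk_nonneg A))
    (mul_nonneg h0 (f1.rk_nonneg A))
  rk_zero := by beta_reduce; rw [f0.rk_zero, f1.rk_zero]; ring
  rk_one := by beta_reduce; rw [f0.rk_one, f1.rk_one]; ring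
  rk_mul_le_left A B := add_le_add
    (mul_le_mul_of_nonneg_left (f0.rk_mul_le_left A B) (by linarith))
    (mul_le_mul_of_nonneg_left (f1.rk_mul_le_left A B) h0)
  rk_mul_le_right A B := add_le_add
    (mul_le_mul_of_nonneg_left (f0.rk_mul_le_right A B) (by linarith))
    (mul_le_mul_of_nonneg_left (f1.rk_mul_le_right A B) h0)
  rk_diag A B := by beta_reduce; rw [f0.rk_diag, f1.rk_diag]; ring
  rk_block_ge A E B := by
    beta_reduce
    have e0 : (1 - t) * (f0.rk ⟨_, _, A⟩ + f0.rk ⟨_, _, B⟩) ≤ (1 - t) * f0.rk (blockSig A E B) :=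
      mul_le_mul_of_nonneg_left (f0.rk_block_ge A E B) (by linarith)
    have e1 : t * (f1.rk ⟨_, _, A⟩ + f1.rk ⟨_, _, B⟩) ≤ t * f1.rk (blockSig A E B) :=
      mul_le_mul_of_nonneg_left (f1.rk_block_ge A E B) h0
    rw [mul_add] at e0 e1
    linarith

end Stmt8Aux


lemma Stmt8Aux.exists_rank {R : Type} [CommRing R] (K0 K1 : Type) [Field K0] [Field K1]
    (φ0 : R →+* K0) (φ1 : R →+* K1) (a : R) (ha0 : φ0 a = 0) (ha1 : φ1 a ≠ 0)
    (r : ℝ) (hr0 : 0 ≤ r) (hr1 : r ≤ 1) :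
    ∃ f : SylvesterRank R, f.IsRegular ∧ f.rk1 a = r := by
  classical
  refine ⟨Stmt8Aux.combo (Stmt8Aux.pullback φ0 (Stmt8Aux.fieldRank K0))
      (Stmt8Aux.pullback φ1 (Stmt8Aux.fieldRank K1)) r hr0 hr1,
    ⟨⟨K0 × K1, ?_, φ0.prod φ1,
      Stmt8Aux.combo (Stmt8Aux.pullback (RingHom.fst K0 K1) (Stmt8Aux.fieldRank K0))
        (Stmt8Aux.pullback (RingHom.snd K0 K1) (Stmt8Aux.fieldRank K1)) r hr0 hr1,
      ?_⟩⟩, ?_⟩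
  · intro x
    refine ⟨(x.1⁻¹, x.2⁻¹), Prod.ext ?_ ?_⟩
    · show x.1 * x.1⁻¹ * x.1 = x.1
      rcases eq_or_ne x.1 0 with h | h
      · simp [h]
      · rw [mul_inv_cancel₀ h, one_mul]
    · show x.2 * x.2⁻¹ * x.2 = x.2
      rcases eq_or_ne x.2 0 with h | h
      · simp [h]
      · rw [mul_inv_cancel₀ h, one_mul]
  · intro p q A
    show (1 - r) * (((A.map φ0).rank : ℕ) : ℝ) + r * (((A.map φ1).rank : ℕ) : ℝ)
      = (1 - r) * ((((A.map (φ0.prod φ1)).map (RingHom.fst K0 K1)).rank : ℕ) : ℝ)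
        + r * ((((A.map (φ0.prod φ1)).map (RingHom.snd K0 K1)).rank : ℕ) : ℝ)
    have c0 : (A.map (φ0.prod φ1)).map (RingHom.fst K0 K1) = A.map φ0 := by
      ext i j; simp [Matrix.map_apply]
    have c1 : (A.map (φ0.prod φ1)).map (RingHom.snd K0 K1) = A.map φ1 := by
      ext i j; simp [Matrix.map_apply]
    rw [c0, c1]
  · have e0 : (Matrix.of (fun _ _ => a) : Matrix (Fin 1) (Fin 1) R).map φ0 = 0 := by
      ext i j
      simp [Matrix.map_apply, ha0]
    have e1 : ((Matrix.of (fun _ _ => a) : Matrix (Fin 1) (Fin 1) R).map φ1).rank = 1 := by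
      have : (Matrix.of (fun _ _ => a) : Matrix (Fin 1) (Fin 1) R).map φ1
          = Matrix.of fun _ _ => φ1 a := by
        ext i j; simp [Matrix.map_apply]
      rw [this]
      exact Stmt8Aux.rank_single ha1
    show (1 - r) * ((((Matrix.of fun _ _ => a : Matrix (Fin 1) (Fin 1) R).map φ0).rank : ℕ) : ℝ)
        + r * ((((Matrix.of fun _ _ => a : Matrix (Fin 1) (Fin 1) R).map φ1).rank : ℕ) : ℝ) = r
    rw [e0, Matrix.rank_zero, e1]
    norm_num

/-- Proposition: let `R` be a commutative unital ring and `a ∈ R` neither invertible nor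
nilpotent.  Then `{rk(a) : rk ∈ ℙ_reg(R)} = [0, 1]`. -/
theorem stmt_8 {R : Type} [CommRing R] (a : R) (h1 : ¬ IsUnit a) (h2 : ¬ IsNilpotent a) :
    {r : ℝ | ∃ f : SylvesterRank R, f.IsRegular ∧ f.rk1 a = r} = Set.Icc 0 (1 : ℝ) := by
  classical
  ext r
  simp only [Set.mem_setOf_eq, Set.mem_Icc]
  constructor
  · rintro ⟨f, -, rfl⟩
    refine ⟨f.rk_nonneg _, ?_⟩
    have h := f.rk_mul_le_right (Matrix.of fun (_ : Fin 1) (_ : Fin 1) => a)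
      (1 : Matrix (Fin 1) (Fin 1) R)
    rw [mul_one] at h
    exact h.trans (le_of_eq f.rk_one)
  · rintro ⟨hr0, hr1⟩
    obtain ⟨I, hImax, haI⟩ := Ideal.exists_le_maximal (Ideal.span {a})
      (by rwa [Ne, Ideal.span_singleton_eq_top])
    have haI' : a ∈ I := haI (Ideal.mem_span_singleton_self a)
    have hnil : a ∉ nilradical R := by rwa [mem_nilradical]
    rw [nilradical_eq_sInf, Submodule.mem_sInf] at hnil
    push_neg at hnil
    obtain ⟨P, hPprime, haP⟩ := hnil
    haveI : I.IsMaximal := hImax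
    haveI : Ideal.IsPrime P := hPprime
    letI : Field (R ⧸ I) := Ideal.Quotient.field I
    exact Stmt8Aux.exists_rank (R ⧸ I) (FractionRing (R ⧸ P)) (Ideal.Quotient.mk I)
      ((algebraMap (R ⧸ P) (FractionRing (R ⧸ P))).comp (Ideal.Quotient.mk P)) a
      (Ideal.Quotient.eq_zero_iff_mem.mpr haI')
      (fun h => haP (by rwa [RingHom.comp_apply, IsFractionRing.to_map_eq_zero_iff,
        Ideal.Quotient.eq_zero_iff_mem] at h)) r hr0 hr1
end

section
/- Let R be a commutative unital ring and a, b ∈ R such that a^n ∉ Rb for all n ∈ ℕ. Then there exists a regular Sylvester matrix rank function rk for R with rk(a) = 1 and rk(b) = 0. -/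
/-! Since `Rb` misses every power of `a` (also `a^0 = 1`, as `a ∉ Rb`), some prime `P`
contains `b` but not `a`. The ordinary rank of matrices over the field `Frac(R/P)` is a Sylvester
rank function, and fields are von Neumann regular; its pullback along `R → Frac(R/P)` is therefore
regular, with value `1` on `a ∉ P` and `0` on `b ∈ P`. The one axiom that takes work is the block
inequality `rk A + rk B ≤ rk [[A, E], [0, B]]` for matrices over a field. -/

open Matrix Module LinearMap

theorem Submodule.finrank_map_add_finrank_inf_ker {K V W : Type*} [DivisionRing K]
    [AddCommGroup V] [Module K V] [AddCommGroup W] [Module K W] (f : V →ₗ[K] W)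
    (U : Submodule K V) [FiniteDimensional K U] :
    finrank K (U.map f) + finrank K ↥(U ⊓ ker f) = finrank K U := by
  rw [← range_domRestrict, ← (f.domRestrict U).finrank_range_add_finrank_ker,
    ← Submodule.finrank_map_subtype_eq U, ker_domRestrict, Submodule.map_comap_subtype]

namespace Matrix

variable {K : Type*} [Field K] {p q r s : Type*}

theorem rank_add_le [Fintype r] (M N : Matrix p r K) : (M + N).rank ≤ M.rank + N.rank := by
  rw [rank, mulVecLin_add]
  have hle : range (M.mulVecLin + N.mulVecLin) ≤ range M.mulVecLin ⊔ range N.mulVecLin := by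
    rintro x ⟨y, rfl⟩
    exact Submodule.add_mem_sup ⟨y, rfl⟩ ⟨y, rfl⟩
  exact (Submodule.finrank_mono hle).trans (Submodule.finrank_add_le_finrank_add_finrank _ _)

variable [Fintype p] [Fintype q] [Fintype r] [Fintype s]

theorem rank_add_rank_le_rank_fromBlocks (A : Matrix p r K) (E : Matrix p s K)
    (B : Matrix q s K) : A.rank + B.rank ≤ (fromBlocks A E 0 B).rank := by
  classical
  -- `π` projects onto the lower block: it maps the column space of the block matrix onto that
  -- of `B`, and its kernel contains the column space of `A`, placed in the upper block.
  let π := (fromCols (0 : Matrix q p K) (1 : Matrix q q K)).mulVecLin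
  have hA : A.rank ≤ finrank K ↥(range (fromBlocks A E 0 B).mulVecLin ⊓ ker π) := by
    have hrange : range (fromRows A (0 : Matrix q r K)).mulVecLin
        ≤ range (fromBlocks A E 0 B).mulVecLin := by
      rw [show fromRows A 0
          = fromBlocks A E 0 B * fromRows (1 : Matrix r r K) (0 : Matrix s r K) by
        simp [fromBlocks_mul_fromRows], mulVecLin_mul]
      exact range_comp_le_range _ _
    have hker : range (fromRows A (0 : Matrix q r K)).mulVecLin ≤ ker π := by
      rw [range_le_ker_iff, ← mulVecLin_mul, fromCols_mul_fromRows]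
      simp
    calc A.rank
        = rank (fromCols (1 : Matrix p p K) (0 : Matrix p q K) * fromRows A 0 : Matrix p r K) := by
          simp [fromCols_mul_fromRows]
      _ ≤ (fromRows A (0 : Matrix q r K)).rank := rank_mul_le_right _ _
      _ ≤ _ := Submodule.finrank_mono (le_inf hrange hker)
  have hB : B.rank ≤ finrank K ↥((range (fromBlocks A E 0 B).mulVecLin).map π) := by
    have hπM : fromCols (0 : Matrix q p K) (1 : Matrix q q K) * fromBlocks A E 0 B
        = fromCols 0 B := by
      simp [fromCols_mul_fromBlocks]
    rw [← range_comp, ← mulVecLin_mul, hπM]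
    calc B.rank
        = rank (fromCols (0 : Matrix q r K) B * fromRows (0 : Matrix r s K) 1 : Matrix q s K) := by
          simp [fromCols_mul_fromRows]
      _ ≤ _ := rank_mul_le_left _ _
  have := Submodule.finrank_map_add_finrank_inf_ker π (range (fromBlocks A E 0 B).mulVecLin)
  change A.rank + B.rank ≤ finrank K (range (fromBlocks A E 0 B).mulVecLin)
  omega

theorem rank_fromBlocks_zero₁₂_zero₂₁ (A : Matrix p r K) (B : Matrix q s K) :
    (fromBlocks A 0 0 B).rank = A.rank + B.rank := by
  classical
  refine le_antisymm ?_ (rank_add_rank_le_rank_fromBlocks A 0 B)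
  have hsplit : fromBlocks A 0 0 B
      = fromRows (1 : Matrix p p K) (0 : Matrix q p K) * A * fromCols (1 : Matrix r r K) 0
        + fromRows (0 : Matrix p q K) (1 : Matrix q q K) * B * fromCols (0 : Matrix s r K) 1 := by
    ext (i | i) (j | j) <;> simp [fromRows_mul]
  rw [hsplit]
  exact (rank_add_le _ _).trans <| add_le_add
    ((rank_mul_le_left _ _).trans (rank_mul_le_right _ _))
    ((rank_mul_le_left _ _).trans (rank_mul_le_right _ _))

end Matrix

theorem blockSig_map {R S : Type} [Ring R] [Ring S] (φ : R →+* S) {p q r s : ℕ}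
    (C : Matrix (Fin p) (Fin r) R) (E : Matrix (Fin p) (Fin s) R)
    (D : Matrix (Fin q) (Fin s) R) :
    (blockSig C E D).2.2.map φ = (blockSig (C.map φ) (E.map φ) (D.map φ)).2.2 := by
  simp only [blockSig, reindex_apply, ← submatrix_map, fromBlocks_map,
    Matrix.map_zero φ (_root_.map_zero φ)]

namespace SylvesterRank

noncomputable def ofField (K : Type) [Field K] : SylvesterRank K where
  rk X := X.2.2.rank
  rk_nonneg _ := Nat.cast_nonneg _
  rk_zero := by simp
  rk_one := by simp
  rk_mul_le_left A B := Nat.cast_le.mpr (rank_mul_le_left A B)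
  rk_mul_le_right A B := Nat.cast_le.mpr (rank_mul_le_right A B)
  rk_diag A B := by
    show ((reindex finSumFinEquiv finSumFinEquiv (fromBlocks A 0 0 B)).rank : ℝ) = _
    rw [rank_reindex, rank_fromBlocks_zero₁₂_zero₂₁, Nat.cast_add]
  rk_block_ge A E B := by
    show _ ≤ ((reindex finSumFinEquiv finSumFinEquiv (fromBlocks A E 0 B)).rank : ℝ)
    rw [rank_reindex]
    exact_mod_cast rank_add_rank_le_rank_fromBlocks A E B

theorem rk1_zero {R : Type} [Ring R] (f : SylvesterRank R) : f.rk1 0 = 0 :=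
  f.rk_zero

theorem rk1_ofField_of_ne_zero {K : Type} [Field K] {x : K} (hx : x ≠ 0) :
    (ofField K).rk1 x = 1 := by
  have hunit : IsUnit (of fun _ _ => x : Matrix (Fin 1) (Fin 1) K) := by
    rw [Matrix.isUnit_iff_isUnit_det, det_fin_one]
    exact hx.isUnit
  simp [rk1, ofField, rank_of_isUnit _ hunit]

noncomputable def comap {R S : Type} [Ring R] [Ring S] (g : SylvesterRank S) (φ : R →+* S) :
    SylvesterRank R where
  rk X := g.rk ⟨X.1, X.2.1, X.2.2.map φ⟩
  rk_nonneg _ := g.rk_nonneg _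
  rk_zero := by simpa [Matrix.map_zero φ (_root_.map_zero φ)] using g.rk_zero
  rk_one := by simpa [Matrix.map_one φ (_root_.map_zero φ) (_root_.map_one φ)] using g.rk_one
  rk_mul_le_left A B := by
    simpa only [Matrix.map_mul] using g.rk_mul_le_left (A.map φ) (B.map φ)
  rk_mul_le_right A B := by
    simpa only [Matrix.map_mul] using g.rk_mul_le_right (A.map φ) (B.map φ)
  rk_diag A B := by
    show g.rk ⟨_, _, (blockSig A 0 B).2.2.map φ⟩ = _
    rw [blockSig_map, Matrix.map_zero φ (_root_.map_zero φ)]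
    exact g.rk_diag (A.map φ) (B.map φ)
  rk_block_ge A E B := by
    show _ ≤ g.rk ⟨_, _, (blockSig A E B).2.2.map φ⟩
    rw [blockSig_map]
    exact g.rk_block_ge (A.map φ) (E.map φ) (B.map φ)

theorem rk1_comap {R S : Type} [Ring R] [Ring S] (g : SylvesterRank S) (φ : R →+* S) (x : R) :
    (g.comap φ).rk1 x = g.rk1 (φ x) :=
  rfl

theorem isRegular_comap {R S : Type} [Ring R] [Ring S] (g : SylvesterRank S)
    (hS : ∀ a : S, ∃ b : S, a * b * a = a) (φ : R →+* S) : (g.comap φ).IsRegular :=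
  ⟨⟨S, hS, φ, g, fun _ _ _ => rfl⟩⟩

end SylvesterRank

theorem Ideal.exists_isPrime_mem_notMem_of_pow_notMem_span {R : Type*} [CommRing R] {a b : R}
    (h : ∀ n : ℕ, 0 < n → a ^ n ∉ Ideal.span {b}) :
    ∃ P : Ideal R, P.IsPrime ∧ b ∈ P ∧ a ∉ P := by
  have hdisj : Disjoint (Ideal.span {b} : Set R) (Submonoid.powers a) := by
    rw [Set.disjoint_left]
    rintro _ hx ⟨_ | n, rfl⟩
    · exact h 1 one_pos (by simpa using Ideal.mul_mem_left _ a hx)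
    · exact h (n + 1) n.succ_pos hx
  obtain ⟨P, hP, hbP, hPa⟩ := Ideal.exists_le_prime_disjoint _ _ hdisj
  exact ⟨P, hP, hbP (Ideal.mem_span_singleton_self b),
    fun haP => Set.disjoint_left.mp hPa haP (Submonoid.mem_powers a)⟩

open SylvesterRank in
/-- Lemma: let `R` be a commutative unital ring and `a, b ∈ R` with `a^n ∉ Rb` for all
`n ≥ 1`.  Then there is a regular Sylvester matrix rank function `rk` for `R` with
`rk(a) = 1` and `rk(b) = 0`. -/
theorem stmt_10 {R : Type} [CommRing R] (a b : R)
    (h : ∀ n : ℕ, 0 < n → a ^ n ∉ Ideal.span {b}) :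
    ∃ f : SylvesterRank R, f.IsRegular ∧ f.rk1 a = 1 ∧ f.rk1 b = 0 := by
  obtain ⟨P, hP, hbP, haP⟩ := Ideal.exists_isPrime_mem_notMem_of_pow_notMem_span h
  let K := FractionRing (R ⧸ P)
  let φ : R →+* K := (algebraMap (R ⧸ P) K).comp (Ideal.Quotient.mk P)
  have hφ (x : R) : φ x = 0 ↔ x ∈ P :=
    (IsFractionRing.to_map_eq_zero_iff (R := R ⧸ P) (K := K)).trans
      Ideal.Quotient.eq_zero_iff_mem
  have hK (x : K) : ∃ y : K, x * y * x = x := ⟨x⁻¹, mul_inv_mul_cancel x⟩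
  refine ⟨(ofField K).comap φ, isRegular_comap _ hK φ, ?_, ?_⟩
  · rw [rk1_comap, rk1_ofField_of_ne_zero ((hφ a).not.mpr haP)]
  · rw [rk1_comap, (hφ b).mpr hbP, rk1_zero]
end

section
/- Let 𝒜 be a unital C*-algebra and A, B rectangular matrices over 𝒜. If A is Malcolmson subequivalent to B, then A is Cuntz subequivalent to B, i.e. there exist sequences of matrices C_n, D_n over 𝒜 with C_n B D_n → A in norm. -/
open Matrix Filter Topology

section Aux

variable {𝒜 : Type} [CStarAlgebra 𝒜]

/-- The set of matrices of the form `C * B * D`. -/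
def CSset (A B : MatSig 𝒜) : Set (Matrix (Fin A.1) (Fin A.2.1) 𝒜) :=
  {M | ∃ (C : Matrix (Fin A.1) (Fin B.1) 𝒜) (D : Matrix (Fin B.2.1) (Fin A.2.1) 𝒜),
    M = C * B.2.2 * D}

/-- Cuntz subequivalence. -/
def Csub (A B : MatSig 𝒜) : Prop := A.2.2 ∈ closure (CSset A B)

lemma csub_refl (A : MatSig 𝒜) : Csub A A :=
  subset_closure ⟨1, 1, by simp⟩

lemma csub_trans {A B E : MatSig 𝒜} (hAB : Csub A B) (hBE : Csub B E) : Csub A E := by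
  have hsub : CSset A B ⊆ closure (CSset A E) := by
    rintro M ⟨C, D, rfl⟩
    have hcont : Continuous (fun X : Matrix (Fin B.1) (Fin B.2.1) 𝒜 => C * X * D) :=
      (continuous_const.matrix_mul continuous_id).matrix_mul continuous_const
    have h1 : C * B.2.2 * D ∈ (fun X : Matrix (Fin B.1) (Fin B.2.1) 𝒜 => C * X * D) ''
        closure (CSset B E) := ⟨B.2.2, hBE, rfl⟩
    have h2 := image_closure_subset_closure_image (s := CSset B E) hcont h1
    refine closure_mono ?_ h2
    rintro _ ⟨N, ⟨C', D', rfl⟩, rfl⟩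
    exact ⟨C * C', D' * D, by simp [Matrix.mul_assoc]⟩
  exact closure_minimal hsub isClosed_closure hAB

lemma block_key {p q r s : ℕ} (C : Matrix (Fin p) (Fin r) 𝒜) (E : Matrix (Fin p) (Fin s) 𝒜)
    (D : Matrix (Fin q) (Fin s) 𝒜) {c : ℝ} (hc : c ≠ 0) :
    (Matrix.reindex finSumFinEquiv finSumFinEquiv
        (Matrix.fromBlocks (c • (1 : Matrix (Fin p) (Fin p) 𝒜)) 0 0
          (1 : Matrix (Fin q) (Fin q) 𝒜))) *
      (Matrix.reindex finSumFinEquiv finSumFinEquiv (Matrix.fromBlocks C E 0 D)) *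
      (Matrix.reindex finSumFinEquiv finSumFinEquiv
        (Matrix.fromBlocks (c⁻¹ • (1 : Matrix (Fin r) (Fin r) 𝒜)) 0 0
          (1 : Matrix (Fin s) (Fin s) 𝒜))) =
      Matrix.reindex finSumFinEquiv finSumFinEquiv (Matrix.fromBlocks C (c • E) 0 D) := by
  simp only [Matrix.reindex_apply, Matrix.submatrix_mul_equiv]
  simp [Matrix.fromBlocks_multiply, Matrix.smul_mul, Matrix.mul_smul, smul_smul,
    mul_inv_cancel₀ hc, inv_mul_cancel₀ hc, one_smul]

lemma mstep_csub {A B : MatSig 𝒜} (h : MStep A B) : Csub A B := by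
  rcases h with ⟨C, D, hCD⟩ | ⟨p, q, r, s, C, E, D, hA, hB⟩
  · exact subset_closure ⟨C, D, hCD⟩
  · subst hA; subst hB
    unfold Csub
    have hmem : ∀ n : ℕ,
        Matrix.reindex finSumFinEquiv finSumFinEquiv
          (Matrix.fromBlocks C (((1 : ℝ)/(n+1)) • E) 0 D) ∈
          CSset (blockSig C 0 D) (blockSig C E D) := by
      intro n
      refine ⟨Matrix.reindex finSumFinEquiv finSumFinEquiv
          (Matrix.fromBlocks (((1 : ℝ)/(n+1)) • (1 : Matrix (Fin p) (Fin p) 𝒜)) 0 0 1),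
        Matrix.reindex finSumFinEquiv finSumFinEquiv
          (Matrix.fromBlocks (((1 : ℝ)/(n+1))⁻¹ • (1 : Matrix (Fin r) (Fin r) 𝒜)) 0 0 1), ?_⟩
      have hc : ((1 : ℝ)/(n+1)) ≠ 0 := by positivity
      exact (block_key C E D hc).symm
    have hcont : Continuous (fun c : ℝ =>
        Matrix.reindex finSumFinEquiv finSumFinEquiv
          (Matrix.fromBlocks C (c • E) 0 D)) := by
      refine continuous_matrix fun i j => ?_
      simp only [Matrix.reindex_apply, Matrix.submatrix_apply]
      rcases hi : finSumFinEquiv.symm i with a | a <;>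
        rcases hj : finSumFinEquiv.symm j with b | b <;>
          simp only [Matrix.fromBlocks_apply₁₁, Matrix.fromBlocks_apply₁₂,
            Matrix.fromBlocks_apply₂₁, Matrix.fromBlocks_apply₂₂, Matrix.smul_apply,
            Matrix.zero_apply]
      · exact continuous_const
      · exact (continuous_id.smul continuous_const)
      · exact continuous_const
      · exact continuous_const
    have hc0 : Tendsto (fun n : ℕ => (1 : ℝ)/(n+1)) atTop (nhds 0) :=
      tendsto_one_div_add_atTop_nhds_zero_nat
    have hlim := (hcont.tendsto 0).comp hc0
    simp only [zero_smul] at hlim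
    have : (blockSig C 0 D).2.2 =
        Matrix.reindex finSumFinEquiv finSumFinEquiv
          (Matrix.fromBlocks C ((0 : ℝ) • E) 0 D) := by
      simp [blockSig]
    rw [this]
    simp only [zero_smul]
    exact mem_closure_of_tendsto hlim (Eventually.of_forall hmem)

end Aux

/-- Lemma: for a unital C*-algebra `𝒜` and rectangular matrices `A, B` over `𝒜`, if `A` is
Malcolmson subequivalent to `B` then `A` is Cuntz subequivalent to `B`: there are sequences of
matrices `C n`, `D n` over `𝒜` with `C n * B * D n → A` (entrywise, equivalently in norm since
the matrices have fixed finite size). -/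
theorem stmt_11 {𝒜 : Type} [CStarAlgebra 𝒜] (A B : MatSig 𝒜) (h : Msub A B) :
    ∃ (C : ℕ → Matrix (Fin A.1) (Fin B.1) 𝒜) (D : ℕ → Matrix (Fin B.2.1) (Fin A.2.1) 𝒜),
      ∀ (i : Fin A.1) (j : Fin A.2.1),
        Filter.Tendsto (fun n => (C n * B.2.2 * D n) i j) Filter.atTop (nhds (A.2.2 i j)) := by
  have hcs : Csub A B := by
    induction h with
    | refl => exact csub_refl A
    | tail _ hbc ih => exact csub_trans ih (mstep_csub hbc)
  haveI : FrechetUrysohnSpace (Matrix (Fin A.1) (Fin A.2.1) 𝒜) :=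
    inferInstanceAs (FrechetUrysohnSpace (Fin A.1 → Fin A.2.1 → 𝒜))
  rw [Csub, mem_closure_iff_seq_limit] at hcs
  obtain ⟨g, hg_mem, hg_lim⟩ := hcs
  choose Cn Dn hCD using hg_mem
  refine ⟨Cn, Dn, fun i j => ?_⟩
  have : ∀ n, (Cn n * B.2.2 * Dn n) i j = g n i j := fun n => by rw [← hCD n]
  simp only [this]
  exact tendsto_pi_nhds.mp (tendsto_pi_nhds.mp hg_lim i) j
end

section
/- Let 𝒜 be a unital C*-algebra, rk a Sylvester matrix rank function for 𝒜, and A a positive square matrix over 𝒜. Then the function θ ↦ rk(A^θ) from (0, ∞) to ℝ is decreasing and uniformly continuous. -/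
section Aux

open Matrix

variable {R : Type} [Ring R] {n : ℕ}

/-- Reindexing a `(n ⊕ n) × (n ⊕ n)` matrix as a `(n+n) × (n+n)` matrix. -/
private abbrev QQ {R : Type} [Ring R] {n : ℕ}
    (X : Matrix (Fin n ⊕ Fin n) (Fin n ⊕ Fin n) R) :
    Matrix (Fin (n + n)) (Fin (n + n)) R :=
  Matrix.reindex finSumFinEquiv finSumFinEquiv X

private lemma QQ_mul (X Y : Matrix (Fin n ⊕ Fin n) (Fin n ⊕ Fin n) R) :
    QQ (X * Y) = QQ X * QQ Y := by
  simp [Matrix.reindex_apply, Matrix.submatrix_mul_equiv]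

private lemma block_identity (A B C : Matrix (Fin n) (Fin n) R) :
    QQ (fromBlocks (B * C) B 0 (A * B)) =
      QQ (fromBlocks 1 0 A 1) *
        (QQ (fromBlocks B 0 0 (-(A * B * C))) *
          (QQ (fromBlocks 1 C 0 1) * QQ (fromBlocks 0 1 1 0))) := by
  rw [← QQ_mul, ← QQ_mul, ← QQ_mul]
  simp [Matrix.fromBlocks_multiply, Matrix.mul_assoc]

private lemma rk_neg (rk : SylvesterRank R) (X : Matrix (Fin n) (Fin n) R) :
    rk.rk ⟨n, n, -X⟩ = rk.rk ⟨n, n, X⟩ := by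
  have h1 := rk.rk_mul_le_right (-1 : Matrix (Fin n) (Fin n) R) X
  have h2 := rk.rk_mul_le_right (-1 : Matrix (Fin n) (Fin n) R) (-X)
  rw [neg_one_mul] at h1 h2
  rw [neg_neg] at h2
  exact le_antisymm h1 h2

private lemma rk_le_one_mat (rk : SylvesterRank R) (X : Matrix (Fin n) (Fin n) R) :
    rk.rk ⟨n, n, X⟩ ≤ rk.rk ⟨n, n, (1 : Matrix (Fin n) (Fin n) R)⟩ := by
  have h := rk.rk_mul_le_right X (1 : Matrix (Fin n) (Fin n) R)
  rwa [mul_one] at h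

/-- The Frobenius inequality for a Sylvester matrix rank function. -/
private lemma rk_frobenius (rk : SylvesterRank R) (A B C : Matrix (Fin n) (Fin n) R) :
    rk.rk ⟨n, n, A * B⟩ + rk.rk ⟨n, n, B * C⟩ ≤
      rk.rk ⟨n, n, B⟩ + rk.rk ⟨n, n, A * B * C⟩ := by
  have h1 : rk.rk ⟨n, n, B * C⟩ + rk.rk ⟨n, n, A * B⟩ ≤
      rk.rk (blockSig (B * C) B (A * B)) := rk.rk_block_ge _ _ _
  have h2 : rk.rk (blockSig (B * C) B (A * B)) ≤
      rk.rk ⟨n + n, n + n, QQ (fromBlocks B 0 0 (-(A * B * C)))⟩ := by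
    show rk.rk ⟨n + n, n + n, QQ (fromBlocks (B * C) B 0 (A * B))⟩ ≤ _
    rw [block_identity]
    exact le_trans (rk.rk_mul_le_right _ _) (rk.rk_mul_le_left _ _)
  have h3 : rk.rk ⟨n + n, n + n, QQ (fromBlocks B 0 0 (-(A * B * C)))⟩ =
      rk.rk ⟨n, n, B⟩ + rk.rk ⟨n, n, -(A * B * C)⟩ := rk.rk_diag _ _
  have h4 := rk_neg rk (A * B * C)
  linarith

private lemma rpow_add_pos {M : Type} [CStarAlgebra M] [PartialOrder M] [StarOrderedRing M]
    (a : M) {x y : ℝ} (hx : 0 < x) (hy : 0 < y) :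
    a ^ (x + y) = a ^ x * a ^ y := by
  rw [← CFC.rpow_eq_pow, ← CFC.rpow_eq_pow, ← CFC.rpow_eq_pow]
  unfold CFC.rpow
  rw [← cfc_mul _ _ a (NNReal.continuous_rpow_const hx.le).continuousOn
    (NNReal.continuous_rpow_const hy.le).continuousOn]
  exact cfc_congr fun z _ => z.rpow_add' (by positivity)

end Aux

/-- Proposition: let `𝒜` be a unital C*-algebra, `rk` a Sylvester matrix rank function for `𝒜`,
and `A` a positive square matrix over `𝒜`.  Then `θ ↦ rk (A ^ θ)` is decreasing and uniformly
continuous on `(0, ∞)`.  Here the C*-algebra `Mₙ(𝒜)` is presented via a star ring isomorphism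
`e` onto a C*-algebra `M` (the C*-norm on `Mₙ(𝒜)` being unique), positivity means `0 ≤ e A`,
and `A ^ θ` is defined through the continuous functional calculus in `M`. -/
theorem stmt_12 {𝒜 : Type} [CStarAlgebra 𝒜] (rk : SylvesterRank 𝒜) {n : ℕ}
    (A : Matrix (Fin n) (Fin n) 𝒜)
    (M : Type) [CStarAlgebra M] [PartialOrder M] [StarOrderedRing M]
    (e : Matrix (Fin n) (Fin n) 𝒜 ≃+* M) (he : ∀ x, e (star x) = star (e x))
    (hA : 0 ≤ e A) :
    AntitoneOn (fun θ : ℝ => rk.rk ⟨n, n, e.symm ((e A) ^ θ)⟩) (Set.Ioi (0 : ℝ)) ∧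
    UniformContinuousOn (fun θ : ℝ => rk.rk ⟨n, n, e.symm ((e A) ^ θ)⟩) (Set.Ioi (0 : ℝ)) := by
  set a : M := e A with ha
  set f : ℝ → ℝ := fun θ : ℝ => rk.rk ⟨n, n, e.symm (a ^ θ)⟩ with hf
  -- monotonicity
  have hmono : ∀ s t : ℝ, 0 < s → s ≤ t → f t ≤ f s := by
    intro s t hs hst
    rcases eq_or_lt_of_le hst with h | h
    · rw [h]
    · have hat : a ^ t = a ^ s * a ^ (t - s) := by
        rw [← rpow_add_pos a hs (by linarith : (0:ℝ) < t - s)]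
        congr 1
        ring
      have : f t = rk.rk ⟨n, n, e.symm (a ^ s) * e.symm (a ^ (t - s))⟩ := by
        rw [hf]
        simp only [hat, map_mul]
      rw [this]
      exact rk.rk_mul_le_left _ _
  -- Frobenius-type inequality for f
  have hfrob : ∀ u v w : ℝ, 0 < u → 0 < v → 0 < w →
      f (u + v) + f (v + w) ≤ f v + f (u + v + w) := by
    intro u v w hu hv hw
    have h1 : e.symm (a ^ (u + v)) = e.symm (a ^ u) * e.symm (a ^ v) := by
      rw [rpow_add_pos a hu hv, map_mul]
    have h2 : e.symm (a ^ (v + w)) = e.symm (a ^ v) * e.symm (a ^ w) := by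
      rw [rpow_add_pos a hv hw, map_mul]
    have h3 : e.symm (a ^ (u + v + w)) = e.symm (a ^ u) * e.symm (a ^ v) * e.symm (a ^ w) := by
      rw [rpow_add_pos a (by linarith : (0:ℝ) < u + v) hw, rpow_add_pos a hu hv, map_mul, map_mul]
    have := rk_frobenius rk (e.symm (a ^ u)) (e.symm (a ^ v)) (e.symm (a ^ w))
    simp only [hf, h1, h2, h3]
    linarith
  -- boundedness
  have hbd : ∀ t : ℝ, f t ≤ rk.rk ⟨n, n, (1 : Matrix (Fin n) (Fin n) 𝒜)⟩ :=
    fun t => rk_le_one_mat rk _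
  constructor
  · intro x hx y hy hxy
    exact hmono x y (Set.mem_Ioi.mp hx) hxy
  · rw [Metric.uniformContinuousOn_iff]
    intro ε hε
    have hNe : (f '' Set.Ioi 0).Nonempty := ⟨f 1, ⟨1, by norm_num, rfl⟩⟩
    have hBdd : BddAbove (f '' Set.Ioi 0) := by
      refine ⟨rk.rk ⟨n, n, (1 : Matrix (Fin n) (Fin n) 𝒜)⟩, ?_⟩
      rintro _ ⟨t, _, rfl⟩
      exact hbd t
    set L := sSup (f '' Set.Ioi 0) with hL
    obtain ⟨_, ⟨t₀, ht₀, rfl⟩, hft₀⟩ :=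
      exists_lt_of_lt_csSup hNe (show L - ε < L by linarith)
    have ht₀' : (0:ℝ) < t₀ := Set.mem_Ioi.mp ht₀
    refine ⟨t₀ / 2, by positivity, ?_⟩
    have key : ∀ x y : ℝ, 0 < x → x ≤ y → y - x < t₀ / 2 → f x - f y < ε := by
      intro x y hx hxy hd
      rcases eq_or_lt_of_le hxy with h | h
      · rw [h]; simpa using hε
      · set δ := t₀ / 2 with hδ
        have hδ0 : (0:ℝ) < δ := by positivity
        set m := min x δ with hm
        have hm0 : 0 < m := lt_min hx hδ0
        have hmδ : m ≤ δ := min_le_right _ _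
        have hmx : m ≤ x := min_le_left _ _
        have step1 : f x - f y ≤ f m - f (m + (y - x)) := by
          rcases eq_or_lt_of_le hmx with hmx' | hmx'
          · rw [hmx']
            have : x + (y - x) = y := by ring
            rw [this]
          · have hfr := hfrob (y - x) m (x - m) (by linarith) hm0 (by linarith)
            have e1 : m + (x - m) = x := by ring
            have e2 : y - x + m + (x - m) = y := by ring
            have e3 : y - x + m = m + (y - x) := by ring
            rw [e1, e2, e3] at hfr
            linarith
        have step2 : f (m + δ) ≤ f (m + (y - x)) :=
          hmono (m + (y - x)) (m + δ) (by linarith) (by linarith)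
        have hmL : f m ≤ L := le_csSup hBdd ⟨m, hm0, rfl⟩
        have step3 : f t₀ ≤ f (m + δ) :=
          hmono (m + δ) t₀ (by linarith) (by rw [hδ] at hmδ ⊢; linarith)
        linarith
    intro x hx y hy hxy
    have hx' : (0:ℝ) < x := Set.mem_Ioi.mp hx
    have hy' : (0:ℝ) < y := Set.mem_Ioi.mp hy
    rw [Real.dist_eq] at hxy
    have habs := abs_lt.mp hxy
    rcases le_total x y with h | h
    · have hk := key x y hx' h (by linarith)
      have hle := hmono x y hx' h
      rw [Real.dist_eq, abs_of_nonneg (by linarith)]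
      linarith
    · have hk := key y x hy' h (by linarith)
      have hle := hmono y x hy' h
      rw [Real.dist_eq, abs_of_nonpos (by linarith)]
      linarith
end

section
/- Let R be a von Neumann regular unital ring and M, N finitely presented left R-modules. Then M ≼_M N (Malcolmson subequivalence of modules) if and only if M is isomorphic to a quotient module of N. -/
/-- One step of the Malcolmson relation on modules: `M ≲ N` iff `N` decomposes as `N₁ ⊕ N₂`
with an exact sequence `N₁ → M → N₂ → 0`. -/
def ModStep {R : Type} [Ring R] (M N : ModuleCat.{0} R) : Prop :=
  ∃ (N₁ N₂ : Submodule R N), IsCompl N₁ N₂ ∧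
    ∃ (f : N₁ →ₗ[R] M) (g : M →ₗ[R] N₂),
      Function.Surjective g ∧ LinearMap.range f = LinearMap.ker g

/-- Malcolmson subequivalence of finitely presented modules: a finite chain of `ModStep`s
through finitely presented modules. -/
def ModMsub {R : Type} [Ring R] (M N : ModuleCat.{0} R) : Prop :=
  Relation.ReflTransGen
    (fun (X Y : ModuleCat.{0} R) => Module.FinitePresentation R X ∧ Module.FinitePresentation R Y ∧ ModStep X Y) M N

/-!
Over a von Neumann regular ring, finitely many elements `a₁, …, aₘ` have a common left unit in
the right ideal they generate. For `x ∈ Rⁿ` this yields a functional `φ` with `φ x • x = x`, so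
`R x` is the range of the idempotent `v ↦ φ v • x`. By modularity of the submodule lattice every
finitely generated submodule of `Rⁿ` is then a direct summand, so finitely presented modules are
projective. In a step `N₁ → M → N₂ → 0` with `N = N₁ ⊕ N₂` projective, the surjection `M → N₂` has a
section `s`, and `n₁ + n₂ ↦ f n₁ + s n₂` is a surjection `N ↠ M`; along a chain these compose.
Conversely a surjection `N ↠ M` is a single step with `N₁ = N` and `N₂ = 0`.
-/

theorem IsCompl.sup_inf_of_le {α : Type*} [Lattice α] [BoundedOrder α] [IsModularLattice α]
    {a b c d : α} (hab : IsCompl a b) (hcb : c ≤ b) (hcd : IsCompl c d) :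
    IsCompl (a ⊔ c) (b ⊓ d) := by
  refine (hcd.disjoint.mono_right inf_le_right).isCompl_sup_left_of_isCompl_sup_right ?_
  rwa [inf_comm, ← sup_inf_assoc_of_le d hcb, hcd.sup_eq_top, top_inf_eq]

section

variable {R : Type*} [Ring R]

theorem exists_mem_span_forall_mul_eq_self (hreg : ∀ a : R, ∃ b : R, a * b * a = a)
    (s : Finset R) : ∃ e ∈ Submodule.span Rᵐᵒᵖ (s : Set R), ∀ a ∈ s, e * a = a := by
  classical
  induction s using Finset.induction_on with
  | empty => exact ⟨0, zero_mem _, by simp⟩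
  | insert a s _ ih =>
    obtain ⟨f, hf, hfs⟩ := ih
    obtain ⟨b, hb⟩ := hreg (a - f * a)
    set I := Submodule.span Rᵐᵒᵖ (↑(insert a s) : Set R)
    have mul_mem_right : ∀ {x} (r : R), x ∈ I → x * r ∈ I := fun r hx =>
      I.smul_mem (MulOpposite.op r) hx
    have hfI : f ∈ I := Submodule.span_mono (by simp) hf
    have haI : a ∈ I := Submodule.subset_span (by simp)
    -- `f` is a left unit for `s`; correct it on `a' = a - f a` using `a' b a' = a'`.
    refine ⟨f + (a - f * a) * b * (1 - f), ?_, ?_⟩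
    · exact add_mem hfI (mul_mem_right _ (mul_mem_right _ (sub_mem haI (mul_mem_right a hfI))))
    · simp only [Finset.mem_insert, forall_eq_or_imp]
      refine ⟨?_, fun x hx => ?_⟩
      · calc (f + (a - f * a) * b * (1 - f)) * a = f * a + (a - f * a) * b * (a - f * a) := by
              noncomm_ring
          _ = a := by rw [hb]; abel
      · have hx' : (1 - f) * x = 0 := by rw [sub_mul, one_mul, hfs x hx, sub_self]
        rw [add_mul, mul_assoc _ (1 - f), hx', mul_zero, add_zero, hfs x hx]

namespace Submodule

variable {E : Type*} [AddCommGroup E] [Module R E]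

theorem isComplemented_span_singleton_of_smul_self (φ : E →ₗ[R] R) {x : E} (h : φ x • x = x) :
    IsComplemented (span R {x}) := by
  have hidem : IsIdempotentElem (φ.smulRight x) := by
    ext v
    simp [Module.End.mul_apply, h]
  refine ⟨_, (congrArg (IsCompl · _) ?_).mp (LinearMap.IsIdempotentElem.isCompl hidem)⟩
  apply le_antisymm
  · rintro _ ⟨v, rfl⟩
    exact smul_mem _ _ (mem_span_singleton_self x)
  · exact (span_singleton_le_iff_mem _ _).mpr ⟨x, h⟩

theorem isComplemented_sup_span_singleton (h : ∀ x : E, IsComplemented (span R {x}))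
    {K : Submodule R E} (hK : IsComplemented K) (x : E) : IsComplemented (K ⊔ span R {x}) := by
  obtain ⟨L, hKL⟩ := hK
  obtain ⟨k, hk, l, hl, rfl⟩ := mem_sup.mp (hKL.sup_eq_top ▸ mem_top (x := x))
  obtain ⟨D, hD⟩ := h l
  have hsup : K ⊔ span R {k + l} = K ⊔ span R {l} := by
    apply le_antisymm <;> refine sup_le le_sup_left ((span_singleton_le_iff_mem _ _).mpr ?_)
    · exact add_mem (mem_sup_left hk) (mem_sup_right (mem_span_singleton_self l))
    · simpa using sub_mem (mem_sup_right (mem_span_singleton_self (k + l))) (mem_sup_left hk)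
  exact hsup ▸ ⟨_, hKL.sup_inf_of_le ((span_singleton_le_iff_mem _ _).mpr hl) hD⟩

theorem isComplemented_of_fg (h : ∀ x : E, IsComplemented (span R {x})) {K : Submodule R E}
    (hK : K.FG) : IsComplemented K := by
  classical
  obtain ⟨s, rfl⟩ := hK
  induction s using Finset.induction_on with
  | empty => simpa using isComplemented_bot
  | insert x s _ ih =>
    rw [Finset.coe_insert, span_insert, sup_comm]
    exact isComplemented_sup_span_singleton h ih x

theorem projective_of_isCompl [Module.Projective R E] {p q : Submodule R E} (h : IsCompl p q) :
    Module.Projective R p :=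
  .of_split p.subtype (p.projectionOnto q h) (projectionOnto_comp_subtype h)

theorem isComplemented_span_singleton_pi (hreg : ∀ a : R, ∃ b : R, a * b * a = a)
    {ι : Type*} [Fintype ι] (x : ι → R) : IsComplemented (span R {x}) := by
  classical
  obtain ⟨e, he, hex⟩ := exists_mem_span_forall_mul_eq_self hreg (Finset.univ.image x)
  rw [Finset.coe_image, Finset.coe_univ, Set.image_univ, mem_span_range_iff_exists_fun] at he
  obtain ⟨c, rfl⟩ := he
  refine isComplemented_span_singleton_of_smul_self
    (∑ i, (LinearMap.proj i).smulRight (c i).unop) (funext fun j => ?_)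
  simpa [Finset.sum_mul] using hex (x j) (Finset.mem_image_of_mem x (Finset.mem_univ j))

end Submodule

theorem Module.projective_of_finitePresentation_of_vonNeumannRegular
    (hreg : ∀ a : R, ∃ b : R, a * b * a = a) (X : Type*) [AddCommGroup X] [Module R X]
    [Module.FinitePresentation R X] : Module.Projective R X := by
  obtain ⟨n, π, hπ⟩ := Module.Finite.exists_fin' R X
  obtain ⟨L, hL⟩ := Submodule.isComplemented_of_fg
    (Submodule.isComplemented_span_singleton_pi hreg) (Module.FinitePresentation.fg_ker π hπ)
  have := Submodule.projective_of_isCompl hL.symm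
  exact .of_equiv
    ((Submodule.quotientEquivOfIsCompl _ _ hL).symm ≪≫ₗ π.quotKerEquivOfSurjective hπ)

end

namespace ModStep

variable {R : Type} [Ring R] {M N : ModuleCat.{0} R}

theorem exists_surjective [Module.Projective R N] (h : ModStep M N) :
    ∃ φ : N →ₗ[R] M, Function.Surjective φ := by
  obtain ⟨N₁, N₂, hN, f, g, hg, hfg⟩ := h
  have := Submodule.projective_of_isCompl hN.symm
  obtain ⟨s, hs⟩ := g.exists_rightInverse_of_surjective (LinearMap.range_eq_top.mpr hg)
  have hgs (y : N₂) : g (s y) = y := LinearMap.congr_fun hs y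
  refine ⟨LinearMap.ofIsCompl hN f s, fun m => ?_⟩
  obtain ⟨a, ha⟩ : m - s (g m) ∈ LinearMap.range f := by
    rw [hfg, LinearMap.mem_ker, map_sub, hgs, sub_self]
  refine ⟨a + g m, ?_⟩
  rw [map_add, LinearMap.ofIsCompl_apply_left, LinearMap.ofIsCompl_apply_right, ha,
    sub_add_cancel]

theorem of_surjective (φ : N →ₗ[R] M) (hφ : Function.Surjective φ) : ModStep M N := by
  refine ⟨⊤, ⊥, isCompl_top_bot, φ ∘ₗ (⊤ : Submodule R N).subtype, 0,
    fun _ => ⟨0, Subsingleton.elim _ _⟩, ?_⟩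
  rw [LinearMap.ker_zero, LinearMap.range_eq_top]
  exact hφ.comp fun y => ⟨⟨y, trivial⟩, rfl⟩

end ModStep

theorem ModMsub.exists_surjective {R : Type} [Ring R] (hreg : ∀ a : R, ∃ b : R, a * b * a = a)
    {M N : ModuleCat.{0} R} (h : ModMsub M N) : ∃ φ : N →ₗ[R] M, Function.Surjective φ := by
  induction h with
  | refl => exact ⟨LinearMap.id, Function.surjective_id⟩
  | @tail _ Z _ hstep ih =>
    obtain ⟨φ, hφ⟩ := ih
    obtain ⟨-, hZ, hstep⟩ := hstep
    have := Module.projective_of_finitePresentation_of_vonNeumannRegular hreg Z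
    obtain ⟨ψ, hψ⟩ := hstep.exists_surjective
    exact ⟨φ ∘ₗ ψ, hφ.comp hψ⟩

/-- Lemma: let `R` be a von Neumann regular unital ring and `M, N` finitely presented left
`R`-modules.  Then `M ≼_M N` if and only if `M` is isomorphic to a quotient module of `N`. -/
theorem stmt_18 {R : Type} [Ring R] (hreg : ∀ a : R, ∃ b : R, a * b * a = a)
    (M N : ModuleCat.{0} R)
    (hM : Module.FinitePresentation R M) (hN : Module.FinitePresentation R N) :
    ModMsub M N ↔ ∃ K : Submodule R N, Nonempty ((N ⧸ K) ≃ₗ[R] M) := by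
  constructor
  · intro h
    obtain ⟨φ, hφ⟩ := h.exists_surjective hreg
    exact ⟨LinearMap.ker φ, ⟨φ.quotKerEquivOfSurjective hφ⟩⟩
  · rintro ⟨K, ⟨e⟩⟩
    exact .single
      ⟨hM, hN, .of_surjective (e.toLinearMap ∘ₗ K.mkQ) (e.surjective.comp K.mkQ_surjective)⟩
end

section
/- Let (W, ≼, v) be a partially ordered abelian semigroup with order-unit, let W₁ be a subsemigroup of W containing v, and let φ be a state of (W₁, ≼, v). For a ∈ W set p = sup{(φ(b) - φ(c))/m : b, c ∈ W₁, m ∈ ℕ, b ≼ c + ma} and q = inf{(φ(b) - φ(c))/m : b, c ∈ W₁, m ∈ ℕ, b ≽ c + ma}. Then -∞ < p ≤ q < ∞, and the set of values ψ(a), as ψ ranges over states of (W, ≼, v) extending φ, is exactly the interval [p, q]. In particular every state of (W₁, ≼, v) extends to a state of (W, ≼, v). -/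
/-- `posSMul n v = (n + 1) • v` in an additive semigroup, so that positive multiples of an
element can be expressed without an identity element. -/
def posSMul {W : Type} [AddCommSemigroup W] : ℕ → W → W
  | 0, v => v
  | n + 1, v => posSMul n v + v

section Kit
variable {W : Type} [AddCommSemigroup W]

/-- `addMulA a x n = x + n • a` (n copies of `a` added to `x`). -/
def addMulA (a x : W) : ℕ → W
  | 0 => x
  | n + 1 => addMulA a x n + a

@[simp] lemma addMulA_zero (a x : W) : addMulA a x 0 = x := rfl
lemma addMulA_succ (a x : W) (n : ℕ) : addMulA a x (n+1) = addMulA a x n + a := rfl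

lemma posSMul_eq_addMulA (a : W) (n : ℕ) : posSMul n a = addMulA a a n := by
  induction n with
  | zero => rfl
  | succ n ih => rw [posSMul, ih]; rfl

lemma addMulA_posSMul (a x : W) (n : ℕ) : x + posSMul n a = addMulA a x (n+1) := by
  induction n with
  | zero => rfl
  | succ n ih => rw [posSMul, ← add_assoc, ih]; rfl

lemma addMulA_add_left (a x y : W) (n : ℕ) : addMulA a (x + y) n = x + addMulA a y n := by
  induction n with
  | zero => rfl
  | succ n ih => rw [addMulA_succ, ih, addMulA_succ, add_assoc]

lemma addMulA_add_left' (a x y : W) (n : ℕ) : addMulA a (x + y) n = y + addMulA a x n := by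
  rw [add_comm x y, addMulA_add_left]

lemma addMulA_addMulA (a x : W) (m n : ℕ) :
    addMulA a x (m + n) = addMulA a (addMulA a x m) n := by
  induction n with
  | zero => rfl
  | succ n ih => rw [← Nat.add_assoc, addMulA_succ, ih, addMulA_succ]

lemma addMulA_add_addMulA (a x y : W) (m n : ℕ) :
    addMulA a x m + addMulA a y n = addMulA a (x + y) (m + n) := by
  induction n with
  | zero =>
    rw [addMulA_zero, Nat.add_zero, addMulA_add_left', add_comm]
  | succ n ih =>
    rw [addMulA_succ, ← add_assoc, ih, ← addMulA_succ]
    rfl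

lemma addMulA_swap (s t x : W) (p q : ℕ) :
    addMulA s (addMulA t x p) q = addMulA t (addMulA s x q) p := by
  induction q with
  | zero => rfl
  | succ q ih =>
    rw [addMulA_succ, ih]
    have : addMulA s x (q+1) = addMulA s x q + s := rfl
    rw [this, add_comm (addMulA s x q) s, addMulA_add_left, add_comm s _]

lemma addMulA_absorb (a x : W) (m : ℕ) : addMulA a (x + a) m = addMulA a x (m + 1) := by
  rw [Nat.add_comm m 1, addMulA_addMulA]; rfl

lemma addMulA_elem_add (s t x : W) (n : ℕ) :
    addMulA (s + t) x n = addMulA t (addMulA s x n) n := by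
  induction n with
  | zero => rfl
  | succ n ih =>
    rw [addMulA_succ, ih, addMulA_succ s x n, addMulA_add_left' t, addMulA_succ t,
      ← add_assoc, add_comm (addMulA t (addMulA s x n) n) s, add_assoc]

lemma addMulA_mem (S : Set W) (hS : ∀ x ∈ S, ∀ y ∈ S, x + y ∈ S) {s x : W}
    (hx : x ∈ S) (hs : s ∈ S) (n : ℕ) : addMulA s x n ∈ S := by
  induction n with
  | zero => exact hx
  | succ n ih => exact hS _ ih _ hs

lemma f_addMulA (S : Set W) (hS : ∀ x ∈ S, ∀ y ∈ S, x + y ∈ S) (f : W → ℝ)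
    (hf : ∀ x ∈ S, ∀ y ∈ S, f (x + y) = f x + f y) {s x : W}
    (hx : x ∈ S) (hs : s ∈ S) (n : ℕ) : f (addMulA s x n) = f x + n * f s := by
  induction n with
  | zero => simp
  | succ n ih =>
    rw [addMulA_succ, hf _ (addMulA_mem S hS hx hs n) _ hs, ih]
    push_cast; ring

end Kit

section OrderKit
variable {W : Type} [AddCommSemigroup W] [PartialOrder W]
  (hadd : ∀ a b c : W, a ≤ b → a + c ≤ b + c)
include hadd
set_option linter.unusedSectionVars false

lemma hadd_left {y z : W} (h : y ≤ z) (x : W) : x + y ≤ x + z := by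
  rw [add_comm x y, add_comm x z]; exact hadd _ _ _ h

lemma addMulA_mono_base {y z : W} (h : y ≤ z) (s : W) (n : ℕ) :
    addMulA s y n ≤ addMulA s z n := by
  induction n with
  | zero => exact h
  | succ n ih => exact hadd _ _ _ ih

lemma addMulA_mono_elem {s t : W} (h : s ≤ t) (y : W) (n : ℕ) :
    addMulA s y n ≤ addMulA t y n := by
  induction n with
  | zero => exact le_refl _
  | succ n ih =>
    calc addMulA s y n + s ≤ addMulA t y n + s := hadd _ _ _ ih
    _ ≤ addMulA t y n + t := hadd_left hadd h _

lemma addMulA_self_mono {y z : W} (h : y ≤ z) (k : ℕ) :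
    addMulA y y k ≤ addMulA z z k := by
  induction k with
  | zero => exact h
  | succ k ih =>
    calc addMulA y y k + y ≤ addMulA z z k + y := hadd _ _ _ ih
    _ ≤ addMulA z z k + z := hadd_left hadd h _

omit hadd [PartialOrder W] in
lemma addMulA_block (a c : W) (M k : ℕ) :
    addMulA (addMulA a c M) (addMulA a c M) k = addMulA a (addMulA c c k) ((k+1) * M) := by
  induction k with
  | zero => simp [Nat.one_mul]
  | succ k ih =>
    rw [addMulA_succ, ih, addMulA_add_addMulA]
    have h1 : addMulA c c (k+1) = addMulA c c k + c := rfl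
    rw [h1]
    congr 1
    ring

end OrderKit
section Key
variable {W : Type} [AddCommSemigroup W] [PartialOrder W]
  (hadd : ∀ a b c : W, a ≤ b → a + c ≤ b + c)
include hadd
set_option linter.unusedSectionVars false

lemma amp1 {a x x' : W} {n d : ℕ} (h : addMulA a x n ≤ addMulA a x' (n + d)) :
    ∀ k : ℕ, addMulA a (addMulA x x k) n ≤ addMulA a (addMulA x' x' k) (n + (k+1) * d) := by
  intro k
  induction k with
  | zero => simpa using h
  | succ k ih =>
    have e1 : addMulA a (addMulA x x (k+1)) n = x + addMulA a (addMulA x x k) n := by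
      rw [addMulA_succ x x k, add_comm _ x, addMulA_add_left]
    have e2 : x + addMulA a (addMulA x' x' k) (n + (k+1) * d)
        = addMulA a (addMulA x' x' k + addMulA a x n) ((k+1) * d) := by
      rw [← addMulA_add_left, addMulA_addMulA, addMulA_add_left' a x _ n]
    have e3 : addMulA a (addMulA x' x' k + addMulA a x' (n + d)) ((k+1) * d)
        = addMulA a (addMulA x' x' (k+1)) (n + (k+2) * d) := by
      have hidx : n + d + (k+1) * d = n + (k+2) * d := by ring
      rw [addMulA_add_left, ← addMulA_addMulA, hidx, addMulA_succ x' x' k, addMulA_add_left]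
    calc addMulA a (addMulA x x (k+1)) n
        = x + addMulA a (addMulA x x k) n := e1
      _ ≤ x + addMulA a (addMulA x' x' k) (n + (k+1) * d) := hadd_left hadd ih x
      _ = addMulA a (addMulA x' x' k + addMulA a x n) ((k+1) * d) := e2
      _ ≤ addMulA a (addMulA x' x' k + addMulA a x' (n + d)) ((k+1) * d) :=
          addMulA_mono_base hadd (hadd_left hadd h _) a _
      _ = addMulA a (addMulA x' x' (k+1)) (n + (k+2) * d) := e3

lemma amp2 {a x x' : W} {n' d : ℕ} (h : addMulA a x (n' + d) ≤ addMulA a x' n') :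
    ∀ k : ℕ, addMulA a (addMulA x x k) (n' + (k+1) * d) ≤ addMulA a (addMulA x' x' k) n' := by
  intro k
  induction k with
  | zero => simpa using h
  | succ k ih =>
    have e1 : addMulA a (addMulA x x (k+1)) (n' + (k+2) * d)
        = addMulA a (addMulA x x k) (n' + (k+1) * d) + addMulA a x d := by
      rw [addMulA_add_addMulA]
      have : n' + (k+1) * d + d = n' + (k+2) * d := by ring
      rw [this]
      rfl
    have e2 : addMulA a (addMulA x' x' k) n' + addMulA a x d
        = addMulA x' x' k + addMulA a x (n' + d) := by
      rw [addMulA_add_addMulA, addMulA_add_left]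
    calc addMulA a (addMulA x x (k+1)) (n' + (k+2) * d)
        = addMulA a (addMulA x x k) (n' + (k+1) * d) + addMulA a x d := e1
      _ ≤ addMulA a (addMulA x' x' k) n' + addMulA a x d := hadd _ _ _ ih
      _ = addMulA x' x' k + addMulA a x (n' + d) := e2
      _ ≤ addMulA x' x' k + addMulA a x' n' := hadd_left hadd h _
      _ = addMulA a (addMulA x' x' (k+1)) n' := by
          rw [← addMulA_add_left, addMulA_succ x' x' k]

omit hadd [AddCommSemigroup W] [PartialOrder W] in
lemma nonpos_of_forall_mul_le {A C : ℝ} (h : ∀ k : ℕ, ((k:ℝ)+1) * A ≤ C) : A ≤ 0 := by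
  by_contra hA
  push_neg at hA
  obtain ⟨k, hk⟩ := exists_nat_gt (C / A)
  have h2 : C < (k:ℝ) * A := by
    rw [div_lt_iff₀ hA] at hk; linarith
  have := h k
  nlinarith

/-- The key monotonicity lemma: if `r` is compatible with all constraints from `(S, f, a)`,
then `x + n•a ≤ x' + n'•a` implies `f x + n r ≤ f x' + n' r`. -/
lemma key_mono (S : Set W) (hS : ∀ x ∈ S, ∀ y ∈ S, x + y ∈ S)
    (f : W → ℝ)
    (hf_add : ∀ x ∈ S, ∀ y ∈ S, f (x + y) = f x + f y)
    (hf_mono : ∀ x ∈ S, ∀ y ∈ S, x ≤ y → f x ≤ f y)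
    (v : W) (hvS : v ∈ S) (hfv : f v = 1)
    (a : W) (N : ℕ) (haN : a ≤ posSMul N v) (hvaN : v ≤ a + posSMul N v)
    (r : ℝ)
    (hr₁ : ∀ b ∈ S, ∀ c ∈ S, ∀ m : ℕ, b ≤ addMulA a c m → f b - f c ≤ m * r)
    (hr₂ : ∀ b ∈ S, ∀ c ∈ S, ∀ m : ℕ, addMulA a c m ≤ b → m * r ≤ f b - f c)
    {x x' : W} (hx : x ∈ S) (hx' : x' ∈ S) {n n' : ℕ}
    (h : addMulA a x n ≤ addMulA a x' n') :
    f x + n * r ≤ f x' + n' * r := by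
  set K := posSMul N v with hK
  have hKS : K ∈ S := by rw [hK, posSMul_eq_addMulA]; exact addMulA_mem S hS hvS hvS N
  have hfK : f K = (N:ℝ) + 1 := by
    rw [hK, posSMul_eq_addMulA, f_addMulA S hS f hf_add hvS hvS N, hfv]; ring
  rcases le_or_gt n n' with hle | hlt
  · -- n ≤ n', d = n' - n
    obtain ⟨d, hd⟩ : ∃ d, n' = n + d := ⟨n' - n, by omega⟩
    subst hd
    have hamp := amp1 hadd h
    -- per k : (k+1) * (f x - f x' - d r) ≤ 2 n (N+1) - n
    have hper : ∀ k : ℕ, ((k:ℝ)+1) * (f x - f x' - d * r) ≤ 2*n*((N:ℝ)+1) - n := by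
      intro k
      set Xk := addMulA x x k with hXk
      set Xk' := addMulA x' x' k with hXk'
      have hXkS : Xk ∈ S := addMulA_mem S hS hx hx k
      have hXk'S : Xk' ∈ S := addMulA_mem S hS hx' hx' k
      have hb : addMulA v Xk n ∈ S := addMulA_mem S hS hXkS hvS n
      have hc : addMulA K (addMulA K Xk' n) n ∈ S :=
        addMulA_mem S hS (addMulA_mem S hS hXk'S hKS n) hKS n
      have chain : addMulA v Xk n ≤ addMulA a (addMulA K (addMulA K Xk' n) n) ((k+1) * d) := by
        calc addMulA v Xk n
            ≤ addMulA (a + K) Xk n := addMulA_mono_elem hadd hvaN Xk n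
          _ = addMulA K (addMulA a Xk n) n := addMulA_elem_add a K Xk n
          _ ≤ addMulA K (addMulA a Xk' (n + (k+1)*d)) n :=
              addMulA_mono_base hadd (hamp k) K n
          _ = addMulA a (addMulA K (addMulA a Xk' n) n) ((k+1)*d) := by
              rw [addMulA_addMulA, addMulA_swap K a]
          _ ≤ addMulA a (addMulA K (addMulA K Xk' n) n) ((k+1)*d) := by
              refine addMulA_mono_base hadd ?_ a _
              exact addMulA_mono_base hadd (addMulA_mono_elem hadd haN Xk' n) K n
      have hcon := hr₁ _ hb _ hc ((k+1)*d) chain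
      rw [f_addMulA S hS f hf_add hXkS hvS n,
        f_addMulA S hS f hf_add (addMulA_mem S hS hXk'S hKS n) hKS n,
        f_addMulA S hS f hf_add hXk'S hKS n,
        f_addMulA S hS f hf_add hx hx k, f_addMulA S hS f hf_add hx' hx' k,
        hfv, hfK] at hcon
      push_cast at hcon ⊢
      nlinarith [hcon]
    have := nonpos_of_forall_mul_le hper
    push_cast
    nlinarith [this]
  · -- n > n', d = n - n'
    obtain ⟨d, hd⟩ : ∃ d, n = n' + d := ⟨n - n', by omega⟩
    subst hd
    have hamp := amp2 hadd h
    have hper : ∀ k : ℕ, ((k:ℝ)+1) * (f x + d * r - f x') ≤ n'*((N:ℝ)+1) - n' * r := by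
      intro k
      set Xk := addMulA x x k with hXk
      set Xk' := addMulA x' x' k with hXk'
      have hXkS : Xk ∈ S := addMulA_mem S hS hx hx k
      have hXk'S : Xk' ∈ S := addMulA_mem S hS hx' hx' k
      have hb : addMulA K Xk' n' ∈ S := addMulA_mem S hS hXk'S hKS n'
      have chain : addMulA a Xk (n' + (k+1)*d) ≤ addMulA K Xk' n' := by
        calc addMulA a Xk (n' + (k+1)*d) ≤ addMulA a Xk' n' := hamp k
          _ ≤ addMulA K Xk' n' := addMulA_mono_elem hadd haN Xk' n'
      have hcon := hr₂ _ hb _ hXkS (n' + (k+1)*d) chain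
      rw [f_addMulA S hS f hf_add hXk'S hKS n', f_addMulA S hS f hf_add hx hx k,
        f_addMulA S hS f hf_add hx' hx' k, hfK] at hcon
      push_cast at hcon ⊢
      nlinarith [hcon]
    have := nonpos_of_forall_mul_le hper
    push_cast
    nlinarith [this]

end Key
section Step
variable {W : Type} [AddCommSemigroup W] [PartialOrder W]
  (hadd : ∀ a b c : W, a ≤ b → a + c ≤ b + c)
include hadd
set_option linter.unusedSectionVars false

lemma one_step (S : Set W) (hS : ∀ x ∈ S, ∀ y ∈ S, x + y ∈ S)
    (f : W → ℝ)
    (hf_add : ∀ x ∈ S, ∀ y ∈ S, f (x + y) = f x + f y)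
    (hf_mono : ∀ x ∈ S, ∀ y ∈ S, x ≤ y → f x ≤ f y)
    (v : W) (hvS : v ∈ S) (hfv : f v = 1)
    (a : W) (N : ℕ) (haN : a ≤ posSMul N v) (hvaN : v ≤ a + posSMul N v)
    (r : ℝ)
    (hr₁ : ∀ b ∈ S, ∀ c ∈ S, ∀ m : ℕ, b ≤ addMulA a c m → f b - f c ≤ m * r)
    (hr₂ : ∀ b ∈ S, ∀ c ∈ S, ∀ m : ℕ, addMulA a c m ≤ b → m * r ≤ f b - f c) :
    ∃ (S' : Set W) (f' : W → ℝ),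
      S ⊆ S' ∧ a ∈ S' ∧ (∀ x ∈ S', ∀ y ∈ S', x + y ∈ S') ∧
      (∀ x ∈ S', ∀ y ∈ S', f' (x + y) = f' x + f' y) ∧
      (∀ x ∈ S', ∀ y ∈ S', x ≤ y → f' x ≤ f' y) ∧
      (∀ x ∈ S, f' x = f x) ∧ f' a = r := by
  classical
  have km : ∀ x ∈ S, ∀ x' ∈ S, ∀ n n' : ℕ, addMulA a x n ≤ addMulA a x' n' →
      f x + n * r ≤ f x' + n' * r := fun x hx x' hx' n n' h =>
    key_mono hadd S hS f hf_add hf_mono v hvS hfv a N haN hvaN r hr₁ hr₂ hx hx' h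
  -- the extended subsemigroup
  set S' : Set W := {y | (∃ x ∈ S, ∃ n : ℕ, y = addMulA a x n) ∨ ∃ n : ℕ, y = addMulA a a n}
    with hS'def
  -- the extended function
  set f' : W → ℝ := fun y =>
    if h : ∃ p : W × ℕ, p.1 ∈ S ∧ v + y = addMulA a p.1 p.2 then
      f (Classical.choose h).1 + ((Classical.choose h).2 : ℝ) * r - 1
    else 0 with hf'def
  -- evaluation: if v + y = addMulA a z m with z ∈ S then f' y = f z + m r - 1
  have hev : ∀ (y z : W) (m : ℕ), z ∈ S → v + y = addMulA a z m →
      f' y = f z + m * r - 1 := by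
    intro y z m hz hrep
    have hex : ∃ p : W × ℕ, p.1 ∈ S ∧ v + y = addMulA a p.1 p.2 := ⟨(z, m), hz, hrep⟩
    rw [hf'def]
    simp only [dif_pos hex]
    obtain ⟨hq1, hq2⟩ := Classical.choose_spec hex
    have heq : addMulA a (Classical.choose hex).1 (Classical.choose hex).2 = addMulA a z m := by
      rw [← hq2, hrep]
    have h1 := km _ hq1 _ hz _ _ heq.le
    have h2 := km _ hz _ hq1 _ _ heq.ge
    linarith
  have hrep1 : ∀ x ∈ S, ∀ n : ℕ, v + addMulA a x n = addMulA a (v + x) n := by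
    intro x hx n; rw [addMulA_add_left]
  have hrep2 : ∀ n : ℕ, v + addMulA a a n = addMulA a v (n + 1) := by
    intro n
    rw [← addMulA_absorb a v n, addMulA_add_left]
  have hev1 : ∀ x ∈ S, ∀ n : ℕ, f' (addMulA a x n) = f x + n * r := by
    intro x hx n
    have := hev (addMulA a x n) (v + x) n (hS _ hvS _ hx) (hrep1 x hx n)
    rw [this, hf_add _ hvS _ hx, hfv]; ring
  have hev2 : ∀ n : ℕ, f' (addMulA a a n) = ((n:ℝ) + 1) * r := by
    intro n
    have := hev (addMulA a a n) v (n + 1) hvS (hrep2 n)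
    rw [this, hfv]; push_cast; ring
  refine ⟨S', f', ?_, ?_, ?_, ?_, ?_, ?_, ?_⟩
  · intro x hx; exact Or.inl ⟨x, hx, 0, rfl⟩
  · exact Or.inr ⟨0, rfl⟩
  · rintro y (⟨x, hx, n, rfl⟩ | ⟨n, rfl⟩) y' (⟨x', hx', n', rfl⟩ | ⟨n', rfl⟩)
    · exact Or.inl ⟨x + x', hS _ hx _ hx', n + n', addMulA_add_addMulA a x x' n n'⟩
    · refine Or.inl ⟨x, hx, n + n' + 1, ?_⟩
      rw [addMulA_add_addMulA, addMulA_absorb]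
    · refine Or.inl ⟨x', hx', n + n' + 1, ?_⟩
      rw [addMulA_add_addMulA, add_comm a x', addMulA_absorb]
    · refine Or.inr ⟨n + n' + 1, ?_⟩
      rw [addMulA_add_addMulA, addMulA_absorb]
  · rintro y (⟨x, hx, n, rfl⟩ | ⟨n, rfl⟩) y' (⟨x', hx', n', rfl⟩ | ⟨n', rfl⟩)
    · rw [addMulA_add_addMulA, hev1 _ hx, hev1 _ hx', hev1 _ (hS _ hx _ hx'),
        hf_add _ hx _ hx']
      push_cast; ring
    · rw [addMulA_add_addMulA, addMulA_absorb, hev1 _ hx, hev1 _ hx, hev2]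
      push_cast; ring
    · rw [addMulA_add_addMulA, add_comm a x', addMulA_absorb]
      have : n + n' + 1 = n + 1 + n' := by omega
      rw [this, hev1 _ hx', hev1 _ hx', hev2]
      push_cast; ring
    · rw [addMulA_add_addMulA, addMulA_absorb, hev2, hev2, hev2]
      push_cast; ring
  · rintro y hy y' hy' hle
    have hyr : ∃ z ∈ S, ∃ m : ℕ, v + y = addMulA a z m ∧ f' y = f z + m * r - 1 := by
      rcases hy with ⟨x, hx, n, rfl⟩ | ⟨n, rfl⟩
      · exact ⟨v + x, hS _ hvS _ hx, n, hrep1 x hx n,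
          hev (addMulA a x n) (v + x) n (hS _ hvS _ hx) (hrep1 x hx n)⟩
      · exact ⟨v, hvS, n + 1, hrep2 n, hev (addMulA a a n) v (n + 1) hvS (hrep2 n)⟩
    have hyr' : ∃ z ∈ S, ∃ m : ℕ, v + y' = addMulA a z m ∧ f' y' = f z + m * r - 1 := by
      rcases hy' with ⟨x, hx, n, rfl⟩ | ⟨n, rfl⟩
      · exact ⟨v + x, hS _ hvS _ hx, n, hrep1 x hx n,
          hev (addMulA a x n) (v + x) n (hS _ hvS _ hx) (hrep1 x hx n)⟩
      · exact ⟨v, hvS, n + 1, hrep2 n, hev (addMulA a a n) v (n + 1) hvS (hrep2 n)⟩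
    obtain ⟨z, hz, m, hzr, hzv⟩ := hyr
    obtain ⟨z', hz', m', hzr', hzv'⟩ := hyr'
    have : addMulA a z m ≤ addMulA a z' m' := by
      rw [← hzr, ← hzr']; exact hadd_left hadd hle v
    have := km _ hz _ hz' _ _ this
    rw [hzv, hzv']; linarith
  · intro x hx
    have := hev1 x hx 0
    simpa using this
  · have := hev2 0
    simpa using this
end Step
section Bounds
variable {W : Type} [AddCommSemigroup W] [PartialOrder W]
  (hadd : ∀ a b c : W, a ≤ b → a + c ≤ b + c)
include hadd
set_option linter.unusedSectionVars false

/-- Every element of the "P set" is below every element of the "Q set". -/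
lemma cross_bound (S : Set W) (hS : ∀ x ∈ S, ∀ y ∈ S, x + y ∈ S)
    (f : W → ℝ)
    (hf_add : ∀ x ∈ S, ∀ y ∈ S, f (x + y) = f x + f y)
    (hf_mono : ∀ x ∈ S, ∀ y ∈ S, x ≤ y → f x ≤ f y)
    (a : W)
    {b c b' c' : W} (hb : b ∈ S) (hc : c ∈ S) (hb' : b' ∈ S) (hc' : c' ∈ S)
    {m m' : ℕ} (h1 : b ≤ addMulA a c (m+1)) (h2 : addMulA a c' (m'+1) ≤ b') :
    (f b - f c) / ((m:ℝ) + 1) ≤ (f b' - f c') / ((m':ℝ) + 1) := by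
  have A1 : addMulA b b m' ≤ addMulA a (addMulA c c m') ((m'+1)*(m+1)) := by
    calc addMulA b b m' ≤ addMulA (addMulA a c (m+1)) (addMulA a c (m+1)) m' :=
          addMulA_self_mono hadd h1 m'
      _ = addMulA a (addMulA c c m') ((m'+1)*(m+1)) := addMulA_block a c (m+1) m'
  have A2 : addMulA a (addMulA c' c' m) ((m'+1)*(m+1)) ≤ addMulA b' b' m := by
    have := addMulA_self_mono hadd h2 m
    rw [addMulA_block a c' (m'+1) m] at this
    have hidx : (m+1)*(m'+1) = (m'+1)*(m+1) := Nat.mul_comm _ _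
    rwa [hidx] at this
  set M := (m'+1)*(m+1) with hM
  have main : addMulA b b m' + addMulA c' c' m ≤ addMulA c c m' + addMulA b' b' m := by
    calc addMulA b b m' + addMulA c' c' m
        ≤ addMulA a (addMulA c c m') M + addMulA c' c' m := hadd _ _ _ A1
      _ = addMulA a (addMulA c c m' + addMulA c' c' m) M := by
          have := addMulA_add_addMulA a (addMulA c c m') (addMulA c' c' m) M 0
          simpa using this
      _ = addMulA c c m' + addMulA a (addMulA c' c' m) M := addMulA_add_left a _ _ M
      _ ≤ addMulA c c m' + addMulA b' b' m := hadd_left hadd A2 _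
  have hbS := addMulA_mem S hS hb hb m'
  have hcS := addMulA_mem S hS hc hc m'
  have hb'S := addMulA_mem S hS hb' hb' m
  have hc'S := addMulA_mem S hS hc' hc' m
  have hmono := hf_mono _ (hS _ hbS _ hc'S) _ (hS _ hcS _ hb'S) main
  rw [hf_add _ hbS _ hc'S, hf_add _ hcS _ hb'S,
    f_addMulA S hS f hf_add hb hb m', f_addMulA S hS f hf_add hc hc m',
    f_addMulA S hS f hf_add hb' hb' m, f_addMulA S hS f hf_add hc' hc' m] at hmono
  rw [div_le_div_iff₀ (by positivity) (by positivity)]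
  nlinarith [hmono]

end Bounds
section Glue
variable {W : Type} [AddCommSemigroup W] [PartialOrder W]
  (hadd : ∀ a b c : W, a ≤ b → a + c ≤ b + c)
include hadd
set_option linter.unusedSectionVars false

lemma PQ_facts (S : Set W) (hS : ∀ x ∈ S, ∀ y ∈ S, x + y ∈ S)
    (f : W → ℝ)
    (hf_add : ∀ x ∈ S, ∀ y ∈ S, f (x + y) = f x + f y)
    (hf_mono : ∀ x ∈ S, ∀ y ∈ S, x ≤ y → f x ≤ f y)
    (v : W) (hvS : v ∈ S)
    (a : W) (N : ℕ) (haN : a ≤ posSMul N v) (hvaN : v ≤ a + posSMul N v) :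
    (({r | ∃ b ∈ S, ∃ c ∈ S, ∃ m : ℕ, b ≤ c + posSMul m a ∧ r = (f b - f c) / (m + 1)} :
        Set ℝ)).Nonempty ∧
    (({r | ∃ b ∈ S, ∃ c ∈ S, ∃ m : ℕ, c + posSMul m a ≤ b ∧ r = (f b - f c) / (m + 1)} :
        Set ℝ)).Nonempty ∧
    (∀ p ∈ ({r | ∃ b ∈ S, ∃ c ∈ S, ∃ m : ℕ, b ≤ c + posSMul m a ∧ r = (f b - f c) / (m + 1)} :
        Set ℝ),
     ∀ q ∈ ({r | ∃ b ∈ S, ∃ c ∈ S, ∃ m : ℕ, c + posSMul m a ≤ b ∧ r = (f b - f c) / (m + 1)} :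
        Set ℝ), p ≤ q) := by
  have hKS : posSMul N v ∈ S := by
    rw [posSMul_eq_addMulA]; exact addMulA_mem S hS hvS hvS N
  refine ⟨⟨_, ⟨v, hvS, posSMul N v, hKS, 0, ?_, rfl⟩⟩,
    ⟨_, ⟨v + posSMul N v, hS _ hvS _ hKS, v, hvS, 0, ?_, rfl⟩⟩, ?_⟩
  · show v ≤ posSMul N v + posSMul 0 a
    rw [show posSMul 0 a = a from rfl, add_comm]; exact hvaN
  · show v + posSMul 0 a ≤ v + posSMul N v
    rw [show posSMul 0 a = a from rfl]; exact hadd_left hadd haN v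
  · rintro p ⟨b, hb, c, hc, m, hcond, rfl⟩ q ⟨b', hb', c', hc', m', hcond', rfl⟩
    rw [addMulA_posSMul] at hcond hcond'
    exact cross_bound hadd S hS f hf_add hf_mono a hb hc hb' hc' hcond hcond'

lemma extend_one (S : Set W) (hS : ∀ x ∈ S, ∀ y ∈ S, x + y ∈ S)
    (f : W → ℝ)
    (hf_add : ∀ x ∈ S, ∀ y ∈ S, f (x + y) = f x + f y)
    (hf_mono : ∀ x ∈ S, ∀ y ∈ S, x ≤ y → f x ≤ f y)
    (v : W) (hvS : v ∈ S) (hfv : f v = 1)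
    (a : W) (N : ℕ) (haN : a ≤ posSMul N v) (hvaN : v ≤ a + posSMul N v)
    (r : ℝ)
    (hr_up : ∀ p ∈ ({r | ∃ b ∈ S, ∃ c ∈ S, ∃ m : ℕ,
      b ≤ c + posSMul m a ∧ r = (f b - f c) / (m + 1)} : Set ℝ), p ≤ r)
    (hr_down : ∀ q ∈ ({r | ∃ b ∈ S, ∃ c ∈ S, ∃ m : ℕ,
      c + posSMul m a ≤ b ∧ r = (f b - f c) / (m + 1)} : Set ℝ), r ≤ q) :
    ∃ (S' : Set W) (f' : W → ℝ),
      S ⊆ S' ∧ a ∈ S' ∧ (∀ x ∈ S', ∀ y ∈ S', x + y ∈ S') ∧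
      (∀ x ∈ S', ∀ y ∈ S', f' (x + y) = f' x + f' y) ∧
      (∀ x ∈ S', ∀ y ∈ S', x ≤ y → f' x ≤ f' y) ∧
      (∀ x ∈ S, f' x = f x) ∧ f' a = r := by
  have hr₁ : ∀ b ∈ S, ∀ c ∈ S, ∀ m : ℕ, b ≤ addMulA a c m → f b - f c ≤ m * r := by
    intro b hb c hc m h
    match m with
    | 0 =>
      simpa using hf_mono _ hb _ hc h
    | m + 1 =>
      rw [← addMulA_posSMul] at h
      have := hr_up _ ⟨b, hb, c, hc, m, h, rfl⟩
      rw [div_le_iff₀ (by positivity)] at this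
      push_cast
      nlinarith [this]
  have hr₂ : ∀ b ∈ S, ∀ c ∈ S, ∀ m : ℕ, addMulA a c m ≤ b → m * r ≤ f b - f c := by
    intro b hb c hc m h
    match m with
    | 0 =>
      simpa using hf_mono _ hc _ hb h
    | m + 1 =>
      rw [← addMulA_posSMul] at h
      have := hr_down _ ⟨b, hb, c, hc, m, h, rfl⟩
      rw [le_div_iff₀ (by positivity)] at this
      push_cast
      nlinarith [this]
  exact one_step hadd S hS f hf_add hf_mono v hvS hfv a N haN hvaN r hr₁ hr₂

lemma full_extension (v : W)
    (hv : ∀ w : W, ∃ n : ℕ, w ≤ w + v ∧ w ≤ posSMul n v ∧ v ≤ w + posSMul n v)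
    (S₀ : Set W) (hS₀ : ∀ x ∈ S₀, ∀ y ∈ S₀, x + y ∈ S₀) (hvS₀ : v ∈ S₀)
    (f₀ : W → ℝ)
    (hf₀_add : ∀ x ∈ S₀, ∀ y ∈ S₀, f₀ (x + y) = f₀ x + f₀ y)
    (hf₀_mono : ∀ x ∈ S₀, ∀ y ∈ S₀, x ≤ y → f₀ x ≤ f₀ y)
    (hf₀v : f₀ v = 1) :
    ∃ ψ : W → ℝ, (∀ x y : W, ψ (x + y) = ψ x + ψ y) ∧
      (∀ x y : W, x ≤ y → ψ x ≤ ψ y) ∧ (∀ x ∈ S₀, ψ x = f₀ x) := by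
  classical
  set G₀ : Set (W × ℝ) := (fun y => (y, f₀ y)) '' S₀ with hG₀def
  set 𝒢 : Set (Set (W × ℝ)) := {G | G₀ ⊆ G ∧
    (∀ p ∈ G, ∀ q ∈ G, p.1 = q.1 → p.2 = q.2) ∧
    (∀ p ∈ G, ∀ q ∈ G, (p.1 + q.1, p.2 + q.2) ∈ G) ∧
    (∀ p ∈ G, ∀ q ∈ G, p.1 ≤ q.1 → p.2 ≤ q.2)} with h𝒢def
  have hG₀ : G₀ ∈ 𝒢 := by
    refine ⟨subset_rfl, ?_, ?_, ?_⟩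
    · rintro p ⟨y, hy, rfl⟩ q ⟨z, hz, rfl⟩ h
      simp only at h ⊢
      rw [h]
    · rintro p ⟨y, hy, rfl⟩ q ⟨z, hz, rfl⟩
      exact ⟨y + z, hS₀ _ hy _ hz, by simp [hf₀_add _ hy _ hz]⟩
    · rintro p ⟨y, hy, rfl⟩ q ⟨z, hz, rfl⟩ h
      exact hf₀_mono _ hy _ hz h
  have hchain : ∀ c ⊆ 𝒢, IsChain (· ⊆ ·) c → c.Nonempty →
      ∃ ub ∈ 𝒢, ∀ s ∈ c, s ⊆ ub := by
    intro c hc hcchain ⟨G1, hG1⟩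
    refine ⟨⋃₀ c, ⟨?_, ?_, ?_, ?_⟩, fun s hs => Set.subset_sUnion_of_mem hs⟩
    · exact subset_trans (hc hG1).1 (Set.subset_sUnion_of_mem hG1)
    · rintro p ⟨GA, hGA, hp⟩ q ⟨GB, hGB, hq⟩ h
      rcases hcchain.total hGA hGB with hAB | hBA
      · exact (hc hGB).2.1 p (hAB hp) q hq h
      · exact (hc hGA).2.1 p hp q (hBA hq) h
    · rintro p ⟨GA, hGA, hp⟩ q ⟨GB, hGB, hq⟩
      rcases hcchain.total hGA hGB with hAB | hBA
      · exact ⟨GB, hGB, (hc hGB).2.2.1 p (hAB hp) q hq⟩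
      · exact ⟨GA, hGA, (hc hGA).2.2.1 p hp q (hBA hq)⟩
    · rintro p ⟨GA, hGA, hp⟩ q ⟨GB, hGB, hq⟩ h
      rcases hcchain.total hGA hGB with hAB | hBA
      · exact (hc hGB).2.2.2 p (hAB hp) q hq h
      · exact (hc hGA).2.2.2 p hp q (hBA hq) h
  obtain ⟨G, hG₀G, hGmem, hGmax⟩ := zorn_subset_nonempty 𝒢 hchain G₀ hG₀
  obtain ⟨hGsub, hGfun, hGadd, hGmono⟩ := hGmem
  set g : W → ℝ := fun x => if h : ∃ y, (x, y) ∈ G then h.choose else 0 with hgdef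
  have hg : ∀ (x : W) (y : ℝ), ((x, y) : W × ℝ) ∈ G → (x, g x) ∈ G ∧ g x = y := by
    intro x y hxy
    have hex : ∃ y, (x, y) ∈ G := ⟨y, hxy⟩
    have hspec := hex.choose_spec
    have : g x = hex.choose := by rw [hgdef]; simp only [dif_pos hex]
    rw [this]
    exact ⟨hspec, hGfun _ hspec _ hxy rfl⟩
  set Sm : Set W := {x | ∃ y, (x, y) ∈ G} with hSmdef
  have hSmG : ∀ x ∈ Sm, (x, g x) ∈ G := fun x hx => (hg x hx.choose hx.choose_spec).1
  have hSmclosed : ∀ x ∈ Sm, ∀ y ∈ Sm, x + y ∈ Sm := by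
    intro x hx y hy
    exact ⟨g x + g y, hGadd _ (hSmG x hx) _ (hSmG y hy)⟩
  have hgadd : ∀ x ∈ Sm, ∀ y ∈ Sm, g (x + y) = g x + g y := by
    intro x hx y hy
    exact (hg _ _ (hGadd _ (hSmG x hx) _ (hSmG y hy))).2
  have hgmono : ∀ x ∈ Sm, ∀ y ∈ Sm, x ≤ y → g x ≤ g y := by
    intro x hx y hy h
    have h1 := (hg x (g x) (hSmG x hx)).2
    exact hGmono _ (hSmG x hx) _ (hSmG y hy) h
  have hS₀Sm : ∀ x ∈ S₀, x ∈ Sm ∧ g x = f₀ x := by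
    intro x hx
    have : ((x, f₀ x) : W × ℝ) ∈ G := hG₀G ⟨x, hx, rfl⟩
    exact ⟨⟨_, this⟩, (hg _ _ this).2⟩
  have hvSm : v ∈ Sm := (hS₀Sm v hvS₀).1
  have hgv : g v = 1 := by rw [(hS₀Sm v hvS₀).2, hf₀v]
  have htotal : ∀ b : W, b ∈ Sm := by
    by_contra hb
    push_neg at hb
    obtain ⟨b, hbm⟩ := hb
    obtain ⟨N, _, hbN, hvbN⟩ := hv b
    obtain ⟨hPne, hQne, hPQ⟩ :=
      PQ_facts hadd Sm hSmclosed g hgadd hgmono v hvSm b N hbN hvbN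
    set Pb : Set ℝ := {r | ∃ x ∈ Sm, ∃ c ∈ Sm, ∃ m : ℕ,
      x ≤ c + posSMul m b ∧ r = (g x - g c) / (m + 1)} with hPbdef
    have hbdd : BddAbove Pb := by
      obtain ⟨q, hq⟩ := hQne
      exact ⟨q, fun p hp => hPQ p hp q hq⟩
    set rb : ℝ := sSup Pb with hrbdef
    obtain ⟨S', f', hSS', hbS', hS'closed, hf'add, hf'mono, hf'res, hf'b⟩ :=
      extend_one hadd Sm hSmclosed g hgadd hgmono v hvSm hgv b N hbN hvbN rb
        (fun p hp => le_csSup hbdd hp)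
        (fun q hq => csSup_le hPne (fun p hp => hPQ p hp q hq))
    set G' : Set (W × ℝ) := (fun y => (y, f' y)) '' S' with hG'def
    have hGG' : G ⊆ G' := by
      rintro ⟨x, y⟩ hxy
      have hx : x ∈ Sm := ⟨y, hxy⟩
      have : y = g x := ((hg x y hxy).2).symm
      subst this
      exact ⟨x, hSS' hx, by simp [hf'res x hx]⟩
    have hG' : G' ∈ 𝒢 := by
      refine ⟨subset_trans hG₀G hGG', ?_, ?_, ?_⟩
      · rintro p ⟨y, hy, rfl⟩ q ⟨z, hz, rfl⟩ h
        simp only at h ⊢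
        rw [h]
      · rintro p ⟨y, hy, rfl⟩ q ⟨z, hz, rfl⟩
        exact ⟨y + z, hS'closed _ hy _ hz, by simp [hf'add _ hy _ hz]⟩
      · rintro p ⟨y, hy, rfl⟩ q ⟨z, hz, rfl⟩ h
        exact hf'mono _ hy _ hz h
    have := hGmax hG' hGG'
    exact hbm ⟨f' b, this ⟨b, hbS', rfl⟩⟩
  exact ⟨g, fun x y => hgadd x (htotal x) y (htotal y),
    fun x y h => hgmono x (htotal x) y (htotal y) h,
    fun x hx => (hS₀Sm x hx).2⟩

end Glue
/-- Theorem (Goodearl–Handelman / Antoine–Perera–Thiel for partially ordered abelian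
semigroups): let `(W, ≤, v)` be a partially ordered abelian semigroup with order-unit `v`, let
`W₁` be a subsemigroup of `W` containing `v`, and let `φ` be a state of `(W₁, ≤, v)`.  For
`a ∈ W`, set `p = sup{(φ b - φ c)/m : b, c ∈ W₁, m ≥ 1, b ≤ c + m a}` and
`q = inf{(φ b - φ c)/m : b, c ∈ W₁, m ≥ 1, b ≥ c + m a}`.  Then both sets are nonempty and
bounded (so `-∞ < p ≤ q < ∞`), `p ≤ q`, and `[p, q]` is exactly the set of values `ψ a` as `ψ`
ranges over the states of `(W, ≤, v)` extending `φ`.  In particular every state of `W₁` extends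
to a state of `W`. -/
theorem stmt_19 {W : Type} [AddCommSemigroup W] [PartialOrder W]
    (hadd : ∀ a b c : W, a ≤ b → a + c ≤ b + c)
    (v : W)
    (hv : ∀ a : W, ∃ n : ℕ, a ≤ a + v ∧ a ≤ posSMul n v ∧ v ≤ a + posSMul n v)
    (W₁ : Set W) (hW₁ : ∀ x ∈ W₁, ∀ y ∈ W₁, x + y ∈ W₁) (hvW₁ : v ∈ W₁)
    (φ : W → ℝ)
    (hφ_add : ∀ x ∈ W₁, ∀ y ∈ W₁, φ (x + y) = φ x + φ y)
    (hφ_mono : ∀ x ∈ W₁, ∀ y ∈ W₁, x ≤ y → φ x ≤ φ y)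
    (hφ_v : φ v = 1)
    (a : W) :
    let P : Set ℝ := {r | ∃ b ∈ W₁, ∃ c ∈ W₁, ∃ m : ℕ,
      b ≤ c + posSMul m a ∧ r = (φ b - φ c) / (m + 1)}
    let Q : Set ℝ := {r | ∃ b ∈ W₁, ∃ c ∈ W₁, ∃ m : ℕ,
      c + posSMul m a ≤ b ∧ r = (φ b - φ c) / (m + 1)}
    P.Nonempty ∧ Q.Nonempty ∧ BddAbove P ∧ BddBelow Q ∧ sSup P ≤ sInf Q ∧
      Set.Icc (sSup P) (sInf Q) =
        {r : ℝ | ∃ ψ : W → ℝ, (∀ x y : W, ψ (x + y) = ψ x + ψ y) ∧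
          (∀ x y : W, x ≤ y → ψ x ≤ ψ y) ∧ ψ v = 1 ∧ (∀ x ∈ W₁, ψ x = φ x) ∧ ψ a = r} := by
  intro P Q
  obtain ⟨Na, _, haN, hvaN⟩ := hv a
  obtain ⟨hPne, hQne, hPQ⟩ :=
    PQ_facts hadd W₁ hW₁ φ hφ_add hφ_mono v hvW₁ a Na haN hvaN
  obtain ⟨q0, hq0⟩ := hQne
  obtain ⟨p0, hp0⟩ := hPne
  have hbddP : BddAbove P := ⟨q0, fun p hp => hPQ p hp q0 hq0⟩
  have hbddQ : BddBelow Q := ⟨p0, fun q hq => hPQ p0 hp0 q hq⟩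
  refine ⟨⟨p0, hp0⟩, ⟨q0, hq0⟩, hbddP, hbddQ,
    csSup_le ⟨p0, hp0⟩ (fun p hp => le_csInf ⟨q0, hq0⟩ (fun q hq => hPQ p hp q hq)), ?_⟩
  ext r
  simp only [Set.mem_Icc, Set.mem_setOf_eq]
  constructor
  · rintro ⟨hr1, hr2⟩
    obtain ⟨S₁, f₁, hWS₁, haS₁, hS₁closed, hf₁add, hf₁mono, hf₁res, hf₁a⟩ :=
      extend_one hadd W₁ hW₁ φ hφ_add hφ_mono v hvW₁ hφ_v a Na haN hvaN r
        (fun p hp => le_trans (le_csSup hbddP hp) hr1)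
        (fun q hq => le_trans hr2 (csInf_le hbddQ hq))
    have hvS₁ : v ∈ S₁ := hWS₁ hvW₁
    have hf₁v : f₁ v = 1 := by rw [hf₁res v hvW₁, hφ_v]
    obtain ⟨ψ, hψadd, hψmono, hψres⟩ :=
      full_extension hadd v hv S₁ hS₁closed hvS₁ f₁ hf₁add hf₁mono hf₁v
    exact ⟨ψ, hψadd, hψmono, by rw [hψres v hvS₁, hf₁v],
      fun x hx => by rw [hψres x (hWS₁ hx), hf₁res x hx],
      by rw [hψres a haS₁, hf₁a]⟩
  · rintro ⟨ψ, hψadd, hψmono, hψv, hψres, rfl⟩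
    have hpos : ∀ (x : W) (m : ℕ), ψ (posSMul m x) = ((m:ℝ)+1) * ψ x := by
      intro x m
      induction m with
      | zero => show ψ x = _; push_cast; ring
      | succ m ih =>
        show ψ (posSMul m x + x) = _
        rw [hψadd, ih]; push_cast; ring
    constructor
    · refine csSup_le ⟨p0, hp0⟩ ?_
      rintro p ⟨b, hb, c, hc, m, hcond, rfl⟩
      have h := hψmono _ _ hcond
      rw [hψadd c (posSMul m a), hpos a m, hψres b hb, hψres c hc] at h
      rw [div_le_iff₀ (by positivity)]
      linarith
    · refine le_csInf ⟨q0, hq0⟩ ?_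
      rintro q ⟨b, hb, c, hc, m, hcond, rfl⟩
      have h := hψmono _ _ hcond
      rw [hψadd c (posSMul m a), hpos a m, hψres b hb, hψres c hc] at h
      rw [le_div_iff₀ (by positivity)]
      linarith
end
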